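/- arXiv:2301.05537 — 8 statements merged into one kernel-verified Lean document; each statement's English description precedes it below -/
import Mathlib

section
/- Let (X_i)_{i≥1} be i.i.d. standard Gaussian real random variables on a probability space, and let 0 < δ ≤ 1/2. Then with probability at least 1 − 4δ, for every positive integer k, |∑_{i=1}^k X_i² − k| ≤ 7·√k·log(k/δ). -/
/-!
Each `X i ^ 2` has moment generating function `(1 - 2t)^(-1/2)`, so `S = ∑_{i ∈ s} X i ^ 2` has
`(1 - 2t)^(-n/2)` with `n = #s`. Chernoff's bound at `t = a / (2(a + 2n))`, combined with
`log y ≤ (y - y⁻¹)/2` (that is, `u ≤ sinh u` for `u ≥ 0`), gives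
`P(S ≥ n + a) ≤ exp(-3a²/(8(a + 2n)))`; at `t = -a/(4n)`, combined with `1 - y⁻¹ ≤ log y`, it
gives `P(S ≤ n - a) ≤ exp(-a²/(8n))`. For `a = 7√n L` with `L = log (n/δ) ≥ 1` both are at most
`exp(-2L) = (δ/n)²`, and the union bound over `n ≥ 1` costs `2δ² ζ(2) = π²δ²/3 ≤ 4δ`.
For `δ ≥ 1/4` there is nothing to prove.
-/

open MeasureTheory ProbabilityTheory Real Finset

lemma Real.log_le_sub_inv_div_two {y : ℝ} (hy : 1 ≤ y) : log y ≤ (y - y⁻¹) / 2 := by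
  rw [← sinh_log (by linarith)]
  exact self_le_sinh_iff.mpr (log_nonneg hy)

-- For `t ≥ 1/2` both sides are the junk value `0`.
lemma integral_exp_mul_sq_gaussianReal (t : ℝ) :
    ∫ x, exp (t * x ^ 2) ∂gaussianReal 0 1 = (√(1 - 2 * t))⁻¹ := by
  have hpdf (x : ℝ) : gaussianPDFReal 0 1 x • exp (t * x ^ 2)
      = (√(2 * π))⁻¹ * exp (-(1 / 2 - t) * x ^ 2) := by
    rw [gaussianPDFReal, smul_eq_mul, mul_assoc, ← exp_add]
    simp only [NNReal.coe_one, mul_one, sub_zero]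
    ring_nf
  rw [integral_gaussianReal_eq_integral_smul one_ne_zero]
  simp_rw [hpdf]
  rw [integral_const_mul, integral_gaussian, ← sqrt_inv, ← sqrt_mul (by positivity),
    ← sqrt_inv]
  congr 1
  field_simp

lemma integrable_exp_mul_sq_gaussianReal {t : ℝ} (ht : t < 1 / 2) :
    Integrable (fun x ↦ exp (t * x ^ 2)) (gaussianReal 0 1) := by
  refine Integrable.of_integral_ne_zero ?_
  rw [integral_exp_mul_sq_gaussianReal t]
  have : 0 < 1 - 2 * t := by linarith
  positivity

lemma Real.inv_sqrt_pow_eq_exp {u : ℝ} (hu : 0 < u) (n : ℕ) :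
    (√u)⁻¹ ^ n = exp (-(n * log u / 2)) := by
  rw [← exp_log (sqrt_pos.mpr hu), log_sqrt hu.le, ← exp_neg, ← exp_nat_mul]
  ring_nf

lemma measureReal_iUnion_le_of_hasSum {α : Type*} {mα : MeasurableSpace α} {μ : Measure α}
    [IsFiniteMeasure μ] {s : ℕ → Set α} {b : ℕ → ℝ} {B : ℝ}
    (hs : ∀ n, μ.real (s n) ≤ b n) (hb : HasSum b B) : μ.real (⋃ n, s n) ≤ B := by
  have hb0 (n : ℕ) : 0 ≤ b n := measureReal_nonneg.trans (hs n)
  refine ENNReal.toReal_le_of_le_ofReal (hb.nonneg hb0) ?_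
  calc μ (⋃ n, s n) ≤ ∑' n, μ (s n) := measure_iUnion_le s
    _ ≤ ∑' n, ENNReal.ofReal (b n) := ENNReal.tsum_le_tsum fun n ↦
      (ENNReal.le_ofReal_iff_toReal_le (measure_ne_top μ _) (hb0 n)).mpr (hs n)
    _ = ENNReal.ofReal B := by rw [← ENNReal.ofReal_tsum_of_nonneg hb0 hb.summable, hb.tsum_eq]

section SumOfSquares

variable {Ω ι : Type*} {mΩ : MeasurableSpace Ω} {μ : Measure Ω}

lemma integrable_exp_mul_sq_of_map_eq_gaussianReal {Y : Ω → ℝ} (hY : AEMeasurable Y μ)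
    (hlaw : μ.map Y = gaussianReal 0 1) {t : ℝ} (ht : t < 1 / 2) :
    Integrable (fun ω ↦ exp (t * Y ω ^ 2)) μ := by
  have h := integrable_exp_mul_sq_gaussianReal ht
  rw [← hlaw] at h
  exact h.comp_aemeasurable hY

lemma mgf_sq_of_map_eq_gaussianReal {Y : Ω → ℝ} (hY : AEMeasurable Y μ)
    (hlaw : μ.map Y = gaussianReal 0 1) (t : ℝ) :
    mgf (fun ω ↦ Y ω ^ 2) μ t = (√(1 - 2 * t))⁻¹ := by
  rw [← integral_exp_mul_sq_gaussianReal t, ← hlaw, integral_map hY (by fun_prop)]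
  rfl

lemma ProbabilityTheory.iIndepFun.sq {X : ι → Ω → ℝ} (hindep : iIndepFun X μ) :
    iIndepFun (fun i ω ↦ X i ω ^ 2) μ :=
  hindep.comp (fun _ x ↦ x ^ 2) fun _ ↦ measurable_id.pow_const 2

lemma integrable_exp_mul_sum_sq [IsProbabilityMeasure μ] {X : ι → Ω → ℝ}
    (hmeas : ∀ i, Measurable (X i)) (hindep : iIndepFun X μ)
    (hlaw : ∀ i, μ.map (X i) = gaussianReal 0 1) (s : Finset ι) {t : ℝ} (ht : t < 1 / 2) :
    Integrable (fun ω ↦ exp (t * (∑ i ∈ s, fun ω ↦ X i ω ^ 2) ω)) μ :=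
  hindep.sq.integrable_exp_mul_sum (fun i ↦ (hmeas i).pow_const 2)
    fun i _ ↦ integrable_exp_mul_sq_of_map_eq_gaussianReal (hmeas i).aemeasurable (hlaw i) ht

lemma mgf_sum_sq {X : ι → Ω → ℝ} (hmeas : ∀ i, Measurable (X i)) (hindep : iIndepFun X μ)
    (hlaw : ∀ i, μ.map (X i) = gaussianReal 0 1) (s : Finset ι) (t : ℝ) :
    mgf (∑ i ∈ s, fun ω ↦ X i ω ^ 2) μ t = (√(1 - 2 * t))⁻¹ ^ #s :=
  (hindep.sq.mgf_sum (fun i ↦ (hmeas i).pow_const 2) s).trans <|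
    prod_eq_pow_card fun i _ ↦ mgf_sq_of_map_eq_gaussianReal (hmeas i).aemeasurable (hlaw i) t

lemma measureReal_card_add_le_sum_sq [IsProbabilityMeasure μ] {X : ι → Ω → ℝ}
    (hmeas : ∀ i, Measurable (X i)) (hindep : iIndepFun X μ)
    (hlaw : ∀ i, μ.map (X i) = gaussianReal 0 1) {s : Finset ι} (hs : s.Nonempty)
    {a : ℝ} (ha : 0 ≤ a) :
    μ.real {ω | #s + a ≤ ∑ i ∈ s, X i ω ^ 2}
      ≤ exp (-(3 * a ^ 2 / (8 * (a + 2 * #s)))) := by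
  have hn : (0 : ℝ) < #s := by exact_mod_cast hs.card_pos
  set y := (a + 2 * #s) / (2 * #s)
  have hy : 1 ≤ y := (one_le_div (by positivity)).mpr (by linarith)
  have ht : a / (2 * (a + 2 * #s)) < 1 / 2 := by
    rw [div_lt_iff₀ (by positivity)]
    linarith
  have h1 : 1 - 2 * (a / (2 * (a + 2 * #s))) = y⁻¹ := by
    simp only [y]
    field_simp
    ring
  have hchernoff := measure_ge_le_exp_mul_mgf (#s + a) (by positivity)
    (integrable_exp_mul_sum_sq hmeas hindep hlaw s ht)
  rw [mgf_sum_sq hmeas hindep hlaw, h1, inv_sqrt_pow_eq_exp (by positivity), log_inv,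
    ← exp_add] at hchernoff
  simp only [Finset.sum_apply] at hchernoff
  refine hchernoff.trans (exp_le_exp.mpr ?_)
  calc -(a / (2 * (a + 2 * #s))) * (#s + a) + -(#s * -log y / 2)
      = -(a / (2 * (a + 2 * #s))) * (#s + a) + #s * log y / 2 := by ring
    _ ≤ -(a / (2 * (a + 2 * #s))) * (#s + a) + #s * ((y - y⁻¹) / 2) / 2 := by
      gcongr
      exact log_le_sub_inv_div_two hy
    _ = -(3 * a ^ 2 / (8 * (a + 2 * #s))) := by
      simp only [y]
      field_simp
      ring

lemma measureReal_sum_sq_le_card_sub [IsProbabilityMeasure μ] {X : ι → Ω → ℝ}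
    (hmeas : ∀ i, Measurable (X i)) (hindep : iIndepFun X μ)
    (hlaw : ∀ i, μ.map (X i) = gaussianReal 0 1) {s : Finset ι} (hs : s.Nonempty)
    {a : ℝ} (ha : 0 ≤ a) :
    μ.real {ω | ∑ i ∈ s, X i ω ^ 2 ≤ #s - a} ≤ exp (-(a ^ 2 / (8 * #s))) := by
  have hn : (0 : ℝ) < #s := by exact_mod_cast hs.card_pos
  set y := (2 * #s + a) / (2 * #s)
  have h1 : 1 - 2 * -(a / (4 * #s)) = y := by
    simp only [y]
    field_simp
    ring
  have ht : -(a / (4 * #s)) ≤ 0 := by simp only [neg_nonpos]; positivity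
  have hchernoff := measure_le_le_exp_mul_mgf (#s - a) ht
    (integrable_exp_mul_sum_sq hmeas hindep hlaw s (ht.trans_lt (by norm_num)))
  rw [mgf_sum_sq hmeas hindep hlaw, h1, inv_sqrt_pow_eq_exp (by positivity), ← exp_add]
    at hchernoff
  simp only [Finset.sum_apply] at hchernoff
  refine hchernoff.trans (exp_le_exp.mpr ?_)
  calc -(-(a / (4 * #s))) * (#s - a) + -(#s * log y / 2)
      ≤ -(-(a / (4 * #s))) * (#s - a) + -(#s * (1 - y⁻¹) / 2) := by
        gcongr
        exact one_sub_inv_le_log_of_pos (by positivity)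
    _ = -(a ^ 2 / (8 * #s)) - a ^ 3 / (8 * #s * (2 * #s + a)) := by
      simp only [y]
      field_simp
      ring
    _ ≤ -(a ^ 2 / (8 * #s)) := by
      have : 0 ≤ a ^ 3 / (8 * #s * (2 * #s + a)) := by positivity
      linarith

lemma measureReal_lt_abs_sum_sq_sub_card [IsProbabilityMeasure μ] {X : ι → Ω → ℝ}
    (hmeas : ∀ i, Measurable (X i)) (hindep : iIndepFun X μ)
    (hlaw : ∀ i, μ.map (X i) = gaussianReal 0 1) {s : Finset ι} (hs : s.Nonempty)
    {L : ℝ} (hL : 1 ≤ L) :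
    μ.real {ω | 7 * √(#s : ℝ) * L < |∑ i ∈ s, X i ω ^ 2 - #s|}
      ≤ 2 * exp (-(2 * L)) := by
  have hn : (1 : ℝ) ≤ #s := by exact_mod_cast hs.card_pos
  set r := √(#s : ℝ)
  have hr : r ^ 2 = #s := sq_sqrt (by positivity)
  have hr1 : 1 ≤ r := one_le_sqrt.mpr hn
  have ha : 0 ≤ 7 * r * L := by positivity
  have hsub : {ω | 7 * r * L < |∑ i ∈ s, X i ω ^ 2 - #s|}
      ⊆ {ω | #s + 7 * r * L ≤ ∑ i ∈ s, X i ω ^ 2}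
        ∪ {ω | ∑ i ∈ s, X i ω ^ 2 ≤ #s - 7 * r * L} := by
    intro ω hω
    simp only [Set.mem_union, Set.mem_ofPred_eq, lt_abs] at hω ⊢
    rcases hω with h | h
    · left; linarith
    · right; linarith
  have hupper : exp (-(3 * (7 * r * L) ^ 2 / (8 * (7 * r * L + 2 * #s)))) ≤ exp (-(2 * L)) := by
    rw [exp_le_exp, neg_le_neg_iff, le_div_iff₀ (by positivity), ← hr]
    nlinarith [mul_le_mul_of_nonneg_left hr1 (by positivity : (0 : ℝ) ≤ r * L ^ 2),
      mul_le_mul_of_nonneg_left hL (by positivity : (0 : ℝ) ≤ r ^ 2 * L)]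
  have hlower : exp (-((7 * r * L) ^ 2 / (8 * #s))) ≤ exp (-(2 * L)) := by
    rw [exp_le_exp, neg_le_neg_iff, le_div_iff₀ (by positivity), ← hr]
    nlinarith [mul_le_mul_of_nonneg_left hL (by positivity : (0 : ℝ) ≤ r ^ 2 * L)]
  calc _ ≤ _ := measureReal_mono hsub
    _ ≤ _ := measureReal_union_le _ _
    _ ≤ exp (-(2 * L)) + exp (-(2 * L)) := by
      gcongr
      · exact (measureReal_card_add_le_sum_sq hmeas hindep hlaw hs ha).trans hupper
      · exact (measureReal_sum_sq_le_card_sub hmeas hindep hlaw hs ha).trans hlower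
    _ = 2 * exp (-(2 * L)) := by ring

-- The event is empty for `k = 0`, matching the term `1 / 0 ^ 2 = 0` of `hasSum_zeta_two`.
lemma measureReal_lt_abs_sum_sq_Icc_sub_le [IsProbabilityMeasure μ] {X : ℕ → Ω → ℝ}
    (hmeas : ∀ i, Measurable (X i)) (hindep : iIndepFun X μ)
    (hlaw : ∀ i, μ.map (X i) = gaussianReal 0 1) {δ : ℝ} (hδ0 : 0 < δ)
    (hδ : δ ≤ exp (-1)) (k : ℕ) :
    μ.real {ω | 1 ≤ k ∧ 7 * √(k : ℝ) * log (k / δ) < |∑ i ∈ Icc 1 k, X i ω ^ 2 - k|}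
      ≤ 2 * δ ^ 2 * (1 / (k : ℝ) ^ 2) := by
  by_cases hk : 1 ≤ k
  swap
  · simp only [hk, false_and, Set.ofPred_false, measureReal_empty]
    positivity
  have hk1 : (1 : ℝ) ≤ k := by exact_mod_cast hk
  have hL : 1 ≤ log (k / δ) := by
    rw [le_log_iff_exp_le (by positivity), le_div_iff₀ hδ0]
    calc exp 1 * δ ≤ exp 1 * exp (-1) := by gcongr
      _ = 1 := by rw [← exp_add, add_neg_cancel, exp_zero]
      _ ≤ k := hk1
  have hdev := measureReal_lt_abs_sum_sq_sub_card hmeas hindep hlaw (nonempty_Icc.mpr hk) hL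
  rw [Nat.card_Icc, Nat.add_sub_cancel] at hdev
  refine (measureReal_mono fun ω hω ↦ hω.2).trans (hdev.trans_eq ?_)
  rw [show -(2 * log (k / δ)) = (2 : ℕ) * log (δ / k) by
      rw [← inv_div, log_inv]; push_cast; ring,
    exp_nat_mul, exp_log (by positivity)]
  field_simp

end SumOfSquares

theorem stmt_0_general {Ω : Type*} [MeasureSpace Ω] [IsProbabilityMeasure (ℙ : Measure Ω)]
    (X : ℕ → Ω → ℝ) (hmeas : ∀ i, Measurable (X i))
    (hindep : iIndepFun X ℙ)
    (hdist : ∀ i, Measure.map (X i) ℙ = gaussianReal 0 1)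
    (δ : ℝ) (hδ0 : 0 < δ) :
    1 - 4 * δ ≤ (ℙ {ω | ∀ k : ℕ, 1 ≤ k →
        |(∑ i ∈ Finset.Icc 1 k, (X i ω) ^ 2) - (k : ℝ)| ≤
          7 * Real.sqrt k * Real.log (k / δ)}).toReal := by
  rcases le_or_gt (1 / 4) δ with hδ | hδ
  · exact le_trans (by linarith) ENNReal.toReal_nonneg
  set good := {ω | ∀ k : ℕ, 1 ≤ k →
    |(∑ i ∈ Finset.Icc 1 k, (X i ω) ^ 2) - (k : ℝ)| ≤ 7 * Real.sqrt k * Real.log (k / δ)}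
  have hδe : δ ≤ exp (-1) := by
    rw [exp_neg, le_inv_comm₀ hδ0 (exp_pos 1)]
    calc exp 1 ≤ 4 := by linarith [exp_one_lt_d9]
      _ ≤ δ⁻¹ := by rw [le_inv_comm₀ (by norm_num) hδ0]; linarith
  have hcompl : goodᶜ = ⋃ k : ℕ, {ω | 1 ≤ k ∧
      7 * √(k : ℝ) * log (k / δ) < |∑ i ∈ Icc 1 k, X i ω ^ 2 - k|} := by
    ext ω
    simp [good]
  have hbound : (ℙ : Measure Ω).real goodᶜ ≤ 2 * δ ^ 2 * (π ^ 2 / 6) :=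
    hcompl ▸ measureReal_iUnion_le_of_hasSum
      (measureReal_lt_abs_sum_sq_Icc_sub_le hmeas hindep hdist hδ0 hδe)
      (hasSum_zeta_two.mul_left _)
  have hcover : 1 ≤ (ℙ : Measure Ω).real good + (ℙ : Measure Ω).real goodᶜ := by
    simpa using measureReal_union_le (μ := ℙ) good goodᶜ
  have hπ : π ^ 2 < 10 := by nlinarith [pi_lt_d2, pi_pos]
  rw [← measureReal_def]
  nlinarith

/-- If `(X i)` are i.i.d. standard Gaussian real random variables and `0 < δ ≤ 1/2`, then
with probability at least `1 - 4δ`, for every positive integer `k`,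
`|∑_{i=1}^k X i ^ 2 - k| ≤ 7 √k log(k/δ)`. -/
theorem stmt_0 {Ω : Type*} [MeasureSpace Ω] [IsProbabilityMeasure (ℙ : Measure Ω)]
    (X : ℕ → Ω → ℝ) (hmeas : ∀ i, Measurable (X i))
    (hindep : iIndepFun X ℙ)
    (hdist : ∀ i, Measure.map (X i) ℙ = gaussianReal 0 1)
    (δ : ℝ) (hδ0 : 0 < δ) (hδ1 : δ ≤ 1 / 2) :
    1 - 4 * δ ≤ (ℙ {ω | ∀ k : ℕ, 1 ≤ k →
        |(∑ i ∈ Finset.Icc 1 k, (X i ω) ^ 2) - (k : ℝ)| ≤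
          7 * Real.sqrt k * Real.log (k / δ)}).toReal :=
  stmt_0_general X hmeas hindep hdist δ hδ0
end

section
/- Let (X_i)_{i≥1} and (Y_i)_{i≥1} be i.i.d. standard Gaussian real random variables, with the two families mutually independent, and let 0 < δ ≤ 1/2. Then with probability at least 1 − 8δ, for every positive integer k, |∑_{i=1}^k X_i·Y_i| ≤ 5·√k·log(k/δ). -/
/-!
If `X` and `Y` are independent standard Gaussians then, integrating out `Y` first,
`𝔼 exp (t X Y) = 𝔼 exp (t² X² / 2) = (1 - t²)^(-1/2) ≤ exp t²` for `|t| ≤ 1/2`.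
The products `Xᵢ Yᵢ` are independent, so the Chernoff bound at a suitable `t ∈ [0, 1/2]` gives
`P(|∑_{i ≤ k} Xᵢ Yᵢ| ≥ 5 √k log (k/δ)) ≤ 2δ/k²`, and the union bound over `k` costs
`2δ ∑ 1/k² = π² δ / 3 ≤ 8δ`.
-/

open MeasureTheory ProbabilityTheory Real Finset

lemma inv_sqrt_one_sub_le_exp {u : ℝ} (hu0 : 0 ≤ u) (hu : u ≤ 1 / 2) :
    (√(1 - u))⁻¹ ≤ exp u := by
  have h : 1 ≤ (1 - u) * exp (2 * u) :=
    calc 1 ≤ (1 - u) * (1 + 2 * u) := by nlinarith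
      _ ≤ (1 - u) * exp (2 * u) := by
        gcongr
        · linarith
        · linarith [add_one_le_exp (2 * u)]
  rw [inv_le_iff_one_le_mul₀' (sqrt_pos.2 (by linarith))]
  calc 1 ≤ √((1 - u) * exp (2 * u)) := one_le_sqrt.2 h
    _ = √(1 - u) * exp u := by
      rw [sqrt_mul (by linarith), two_mul, exp_add, sqrt_mul_self (exp_pos u).le]

lemma exists_chernoff_parameter {K δ : ℝ} (hK : 1 ≤ K) (hδ0 : 0 < δ) (hδ1 : δ ≤ 1 / 2) :
    ∃ t, 0 ≤ t ∧ t ≤ 1 / 2 ∧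
      -t * (5 * √K * log (K / δ)) + K * t ^ 2 ≤ log (δ / K ^ 2) := by
  obtain ⟨s, hs1, rfl⟩ : ∃ s, 1 ≤ s ∧ K = s ^ 2 :=
    ⟨√K, one_le_sqrt.2 hK, (sq_sqrt (by linarith)).symm⟩
  have hs0 : 0 < s := by linarith
  set l := log (s ^ 2)
  set M := -log δ
  have hM : 0.69 < M := by
    have := log_le_log hδ0 hδ1
    rw [one_div, log_inv] at this
    linarith [log_two_gt_d9]
  have hl0 : 0 ≤ l := log_nonneg (by nlinarith)
  have hl : l ≤ 2 * (s - 1) := by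
    simp only [l, log_pow]; push_cast; linarith [log_le_sub_one_of_pos hs0]
  have hL : log (s ^ 2 / δ) = l + M := by rw [log_div (by positivity) hδ0.ne']; ring
  have htarget : log (δ / (s ^ 2) ^ 2) = -(M + 2 * l) := by
    rw [log_div hδ0.ne' (by positivity), pow_two (s ^ 2), log_mul (by positivity) (by positivity)]
    ring
  rw [sqrt_sq hs0.le, hL, htarget]
  -- `t = 5 (l + M) / (2 s)` minimises the left-hand side; if it exceeds `1 / 2`, take `t = 1 / 2`.
  rcases le_or_gt (5 * (l + M)) s with hsmall | hlarge
  · refine ⟨5 * (l + M) / (2 * s), by positivity, by rw [div_le_iff₀ (by positivity)]; linarith, ?_⟩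
    have : -(5 * (l + M) / (2 * s)) * (5 * s * (l + M)) + s ^ 2 * (5 * (l + M) / (2 * s)) ^ 2
        = -(25 / 4) * (l + M) ^ 2 := by
      field_simp; ring
    rw [this]
    nlinarith
  · refine ⟨1 / 2, by norm_num, le_rfl, ?_⟩
    rcases le_or_gt (8 / 5) s with hs | hs
    · nlinarith
    · nlinarith [mul_le_mul_of_nonneg_left hl (by linarith : (0:ℝ) ≤ 2 - 5 * s / 4)]

namespace ProbabilityTheory

lemma integral_exp_mul_gaussianReal (t : ℝ) :
    ∫ x, exp (t * x) ∂gaussianReal 0 1 = exp (t ^ 2 / 2) := by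
  simpa [mgf] using congrFun (mgf_id_gaussianReal (μ := 0) (v := 1)) t

lemma integral_exp_mul_sq_gaussianReal {a : ℝ} (ha : a < 1 / 2) :
    ∫ x, exp (a * x ^ 2) ∂gaussianReal 0 1 = (√(1 - 2 * a))⁻¹ := by
  have hb : 0 < 1 / 2 - a := by linarith
  have hpdf (x : ℝ) : gaussianPDFReal 0 1 x * exp (a * x ^ 2)
      = (√(2 * π))⁻¹ * exp (-(1 / 2 - a) * x ^ 2) := by
    rw [gaussianPDFReal_def, mul_assoc, ← exp_add]
    simp only [NNReal.coe_one, mul_one, sub_zero]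
    ring_nf
  simp_rw [integral_gaussianReal_eq_integral_smul one_ne_zero, smul_eq_mul, hpdf,
    integral_const_mul, integral_gaussian]
  rw [show 1 - 2 * a = 2 * (1 / 2 - a) by ring, sqrt_div' _ hb.le, sqrt_mul (by norm_num),
    sqrt_mul (by norm_num)]
  have : √π ≠ 0 := by positivity
  field_simp

lemma integrable_exp_mul_sq_gaussianReal {a : ℝ} (ha : a < 1 / 2) :
    Integrable (fun x ↦ exp (a * x ^ 2)) (gaussianReal 0 1) := by
  refine Integrable.of_integral_ne_zero ?_
  rw [integral_exp_mul_sq_gaussianReal ha]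
  have : 0 < 1 - 2 * a := by linarith
  positivity

lemma integral_exp_mul_mul_gaussianReal (t x : ℝ) :
    ∫ y, exp (t * (x * y)) ∂gaussianReal 0 1 = exp (t ^ 2 / 2 * x ^ 2) := by
  simp_rw [← mul_assoc, integral_exp_mul_gaussianReal]
  ring_nf

lemma integrable_exp_mul_mul_gaussianReal_prod {t : ℝ} (ht : t ^ 2 < 1) :
    Integrable (fun p : ℝ × ℝ ↦ exp (t * (p.1 * p.2)))
      ((gaussianReal 0 1).prod (gaussianReal 0 1)) := by
  refine (integrable_prod_iff (by fun_prop)).2 ⟨ae_of_all _ fun x ↦ ?_, ?_⟩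
  · simp_rw [← mul_assoc]
    exact integrable_exp_mul_gaussianReal _
  · simp_rw [norm_of_nonneg (exp_nonneg _), integral_exp_mul_mul_gaussianReal]
    exact integrable_exp_mul_sq_gaussianReal (by linarith)

lemma integral_exp_mul_mul_gaussianReal_prod {t : ℝ} (ht : t ^ 2 < 1) :
    ∫ p : ℝ × ℝ, exp (t * (p.1 * p.2)) ∂(gaussianReal 0 1).prod (gaussianReal 0 1)
      = (√(1 - t ^ 2))⁻¹ := by
  rw [integral_prod _ (integrable_exp_mul_mul_gaussianReal_prod ht)]
  simp_rw [integral_exp_mul_mul_gaussianReal]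
  rw [integral_exp_mul_sq_gaussianReal (by linarith)]
  ring_nf

variable {Ω : Type*} {mΩ : MeasurableSpace Ω} {P : Measure Ω}

lemma IndepFun.integrable_exp_mul_mul_of_gaussianReal [IsFiniteMeasure P] {X Y : Ω → ℝ}
    (hXY : IndepFun X Y P) (hX : HasLaw X (gaussianReal 0 1) P)
    (hY : HasLaw Y (gaussianReal 0 1) P) {t : ℝ} (ht : t ^ 2 < 1) :
    Integrable (fun ω ↦ exp (t * (X ω * Y ω))) P := by
  have hlaw := hXY.hasLaw_prod hX hY
  have h := integrable_exp_mul_mul_gaussianReal_prod ht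
  rwa [← hlaw.map_eq, integrable_map_measure (by fun_prop) hlaw.aemeasurable] at h

lemma IndepFun.mgf_mul_of_gaussianReal [IsFiniteMeasure P] {X Y : Ω → ℝ}
    (hXY : IndepFun X Y P) (hX : HasLaw X (gaussianReal 0 1) P)
    (hY : HasLaw Y (gaussianReal 0 1) P) {t : ℝ} (ht : t ^ 2 < 1) :
    mgf (fun ω ↦ X ω * Y ω) P t = (√(1 - t ^ 2))⁻¹ := by
  rw [← integral_exp_mul_mul_gaussianReal_prod ht,
    ← (hXY.hasLaw_prod hX hY).integral_comp (by fun_prop)]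
  rfl

lemma iIndepFun.curry {ι κ 𝓧 : Type*} [Countable ι] [Countable κ] [MeasurableSpace 𝓧]
    {X : ι → κ → Ω → 𝓧} (hX : ∀ i j, AEMeasurable (X i j) P)
    (h : iIndepFun (fun p : ι × κ ↦ X p.1 p.2) P) :
    iIndepFun (fun i ω j ↦ X i j ω) P := by
  have := h.isProbabilityMeasure
  have (i : ι) (j : κ) : IsProbabilityMeasure (P.map (X i j)) :=
    Measure.isProbabilityMeasure_map (hX i j)
  have hXuncurry : AEMeasurable (fun ω (p : ι × κ) ↦ X p.1 p.2 ω) P :=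
    aemeasurable_pi_iff.2 fun p ↦ hX p.1 p.2
  have hlaw : P.map (fun ω (p : ι × κ) ↦ X p.1 p.2 ω)
      = Measure.infinitePi fun p : ι × κ ↦ P.map (X p.1 p.2) :=
    h.map_fun_eq_infinitePi_map₀ hXuncurry
  have hrow (i : ι) : P.map (fun ω j ↦ X i j ω) = Measure.infinitePi (fun j ↦ P.map (X i j)) :=
    (h.precomp (Prod.mk_right_injective i)).map_fun_eq_infinitePi_map₀' (hX i)
  rw [iIndepFun_iff_map_fun_eq_infinitePi_map₀' fun i ↦ aemeasurable_pi_iff.2 (hX i)]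
  calc P.map (fun ω i j ↦ X i j ω)
      = (P.map fun ω (p : ι × κ) ↦ X p.1 p.2 ω).map (MeasurableEquiv.curry ι κ 𝓧) := by
        rw [AEMeasurable.map_map_of_aemeasurable (by fun_prop) hXuncurry]
        rfl
    _ = Measure.infinitePi fun i ↦ Measure.infinitePi fun j ↦ P.map (X i j) := by
        rw [hlaw]
        exact Measure.infinitePi_map_curry fun i j ↦ P.map (X i j)
    _ = Measure.infinitePi fun i ↦ P.map (fun ω j ↦ X i j ω) := by simp_rw [hrow]

lemma iIndepFun.prodMk_of_sumElim {ι 𝓧 : Type*} [Countable ι] [MeasurableSpace 𝓧]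
    {X Y : ι → Ω → 𝓧} (hX : ∀ i, AEMeasurable (X i) P) (hY : ∀ i, AEMeasurable (Y i) P)
    (h : iIndepFun (Sum.elim X Y) P) :
    iIndepFun (fun i ω ↦ (X i ω, Y i ω)) P := by
  have hrows := iIndepFun.curry (X := fun i b ↦ Sum.elim X Y (Equiv.boolProdEquivSum ι (b, i)))
    (fun i b ↦ by cases b <;> simp [hX, hY])
    (h.precomp ((Equiv.boolProdEquivSum ι).injective.comp Prod.swap_injective))
  exact hrows.comp (fun _ v ↦ (v false, v true)) fun _ ↦ by fun_prop

section Chernoff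

variable {ι : Type*} {Z : ι → Ω → ℝ}

lemma iIndepFun.measureReal_sum_ge_le (hZ : iIndepFun Z P) (hm : ∀ i, AEMeasurable (Z i) P)
    {s : Finset ι} {t c : ℝ} (ht : 0 ≤ t)
    (hint : ∀ i ∈ s, Integrable (fun ω ↦ exp (t * Z i ω)) P)
    (hmgf : ∀ i ∈ s, mgf (Z i) P t ≤ exp (c * t ^ 2)) (ε : ℝ) :
    P.real {ω | ε ≤ ∑ i ∈ s, Z i ω} ≤ exp (-t * ε + #s * c * t ^ 2) := by
  have := hZ.isProbabilityMeasure
  have hmgf_sum : mgf (∑ i ∈ s, Z i) P t = ∏ i ∈ s, mgf (Z i) P t := hZ.mgf_sum₀ hm s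
  have hint_sum : Integrable (fun ω ↦ exp (t * (∑ i ∈ s, Z i) ω)) P :=
    Integrable.of_integral_ne_zero <| hmgf_sum.trans_ne <|
      prod_ne_zero_iff.2 fun i hi ↦ (mgf_pos (hint i hi)).ne'
  calc P.real {ω | ε ≤ ∑ i ∈ s, Z i ω}
      = P.real {ω | ε ≤ (∑ i ∈ s, Z i) ω} := by simp only [Finset.sum_apply]
    _ ≤ exp (-t * ε) * mgf (∑ i ∈ s, Z i) P t := measure_ge_le_exp_mul_mgf ε ht hint_sum
    _ ≤ exp (-t * ε) * ∏ _i ∈ s, exp (c * t ^ 2) := by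
        rw [hmgf_sum]
        gcongr with i hi
        · exact fun _ _ ↦ mgf_nonneg
        · exact hmgf i hi
    _ = exp (-t * ε) * exp (#s * c * t ^ 2) := by rw [prod_const, ← exp_nat_mul, mul_assoc]
    _ = exp (-t * ε + #s * c * t ^ 2) := (exp_add _ _).symm

lemma iIndepFun.measureReal_abs_sum_ge_le (hZ : iIndepFun Z P) (hm : ∀ i, AEMeasurable (Z i) P)
    {s : Finset ι} {t c : ℝ} (ht : 0 ≤ t)
    (hint : ∀ i ∈ s, ∀ u, |u| ≤ t → Integrable (fun ω ↦ exp (u * Z i ω)) P)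
    (hmgf : ∀ i ∈ s, ∀ u, |u| ≤ t → mgf (Z i) P u ≤ exp (c * u ^ 2)) (ε : ℝ) :
    P.real {ω | ε ≤ |∑ i ∈ s, Z i ω|} ≤ 2 * exp (-t * ε + #s * c * t ^ 2) := by
  have := hZ.isProbabilityMeasure
  have hneg : iIndepFun (fun i ↦ -Z i) P := hZ.comp (fun _ x ↦ -x) fun _ ↦ measurable_neg
  have ht' : |t| ≤ t := (abs_of_nonneg ht).le
  have ht'' : |-t| ≤ t := by rwa [abs_neg]
  have hupper := hZ.measureReal_sum_ge_le hm ht (fun i hi ↦ hint i hi t ht')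
    (fun i hi ↦ hmgf i hi t ht') ε
  have hlower := hneg.measureReal_sum_ge_le (fun i ↦ (hm i).neg) ht
    (fun i hi ↦ by simpa using hint i hi (-t) ht'')
    (fun i hi ↦ by simpa [mgf_neg] using hmgf i hi (-t) ht'') ε
  calc P.real {ω | ε ≤ |∑ i ∈ s, Z i ω|}
      ≤ P.real ({ω | ε ≤ ∑ i ∈ s, Z i ω} ∪ {ω | ε ≤ ∑ i ∈ s, (-Z i) ω}) := by
        refine measureReal_mono fun ω hω ↦ ?_
        simpa [le_abs, sum_neg_distrib] using hω
    _ ≤ P.real {ω | ε ≤ ∑ i ∈ s, Z i ω} + P.real {ω | ε ≤ ∑ i ∈ s, (-Z i) ω} :=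
        measureReal_union_le _ _
    _ ≤ 2 * exp (-t * ε + #s * c * t ^ 2) := by linarith

end Chernoff

end ProbabilityTheory

section

variable {Ω : Type*} {mΩ : MeasurableSpace Ω} {P : Measure Ω}

lemma measureReal_abs_sum_mul_gaussianReal_ge_le {ι : Type*} {X Y : ι → Ω → ℝ}
    (hX : ∀ i, HasLaw (X i) (gaussianReal 0 1) P) (hY : ∀ i, HasLaw (Y i) (gaussianReal 0 1) P)
    (hXY : ∀ i, IndepFun (X i) (Y i) P) (hZ : iIndepFun (fun i ω ↦ X i ω * Y i ω) P)
    {s : Finset ι} (hs : s.Nonempty) {δ : ℝ} (hδ0 : 0 < δ) (hδ1 : δ ≤ 1 / 2) :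
    P.real {ω | 5 * √(#s : ℝ) * log (#s / δ) ≤ |∑ i ∈ s, X i ω * Y i ω|} ≤ 2 * δ / #s ^ 2 := by
  have := hZ.isProbabilityMeasure
  obtain ⟨t, ht0, ht1, ht⟩ :=
    exists_chernoff_parameter (K := #s) (by exact_mod_cast hs.card_pos) hδ0 hδ1
  have hsq (u : ℝ) (hu : |u| ≤ t) : u ^ 2 < 1 := by
    rw [← sq_abs]; nlinarith [abs_nonneg u]
  calc _ ≤ 2 * exp (-t * (5 * √(#s : ℝ) * log (#s / δ)) + #s * 1 * t ^ 2) :=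
        hZ.measureReal_abs_sum_ge_le (fun i ↦ by fun_prop) ht0
          (fun i _ u hu ↦ (hXY i).integrable_exp_mul_mul_of_gaussianReal (hX i) (hY i) (hsq u hu))
          (fun i _ u hu ↦ by
            rw [(hXY i).mgf_mul_of_gaussianReal (hX i) (hY i) (hsq u hu), one_mul]
            refine inv_sqrt_one_sub_le_exp (sq_nonneg u) ?_
            rw [← sq_abs]; nlinarith [abs_nonneg u]) _
    _ ≤ 2 * (δ / #s ^ 2) := by
        rw [mul_one, ← exp_log (by positivity : (0:ℝ) < δ / #s ^ 2)]
        gcongr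
    _ = 2 * δ / #s ^ 2 := by ring

lemma one_sub_le_measureReal_iInter [IsProbabilityMeasure P] {ι : Type*} [Countable ι]
    {A : ι → Set Ω} {f : ι → ℝ} {a : ℝ} (hf : HasSum f a) (hA : ∀ i, P.real (A i)ᶜ ≤ f i) :
    1 - a ≤ P.real (⋂ i, A i) := by
  have hf0 (i : ι) : 0 ≤ f i := measureReal_nonneg.trans (hA i)
  have hcompl : P (⋂ i, A i)ᶜ ≤ ENNReal.ofReal a := by
    rw [Set.compl_iInter]
    calc P (⋃ i, (A i)ᶜ) ≤ ∑' i, P (A i)ᶜ := measure_iUnion_le _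
      _ ≤ ∑' i, ENNReal.ofReal (f i) := ENNReal.tsum_le_tsum fun i ↦
          (ENNReal.le_ofReal_iff_toReal_le (measure_ne_top _ _) (hf0 i)).2 (hA i)
      _ = ENNReal.ofReal a := by rw [← ENNReal.ofReal_tsum_of_nonneg hf0 hf.summable, hf.tsum_eq]
  have hunion : 1 ≤ P.real (⋂ i, A i) + P.real (⋂ i, A i)ᶜ := by
    rw [← probReal_univ (μ := P), ← Set.union_compl_self (⋂ i, A i)]
    exact measureReal_union_le _ _
  have : P.real (⋂ i, A i)ᶜ ≤ a := ENNReal.toReal_le_of_le_ofReal (hf.nonneg hf0) hcompl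
  linarith

end

theorem stmt_1_general {Ω : Type*} [MeasureSpace Ω] [IsProbabilityMeasure (ℙ : Measure Ω)]
    (X Y : ℕ → Ω → ℝ)
    (hindep : iIndepFun (Sum.elim X Y) ℙ)
    (hdX : ∀ i, Measure.map (X i) ℙ = gaussianReal 0 1)
    (hdY : ∀ i, Measure.map (Y i) ℙ = gaussianReal 0 1)
    (δ : ℝ) (hδ0 : 0 < δ) (hδ1 : δ ≤ 1 / 2) :
    1 - 8 * δ ≤ (ℙ {ω | ∀ k : ℕ, 1 ≤ k →
        |∑ i ∈ Finset.Icc 1 k, X i ω * Y i ω| ≤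
          5 * Real.sqrt k * Real.log (k / δ)}).toReal := by
  have hX (i : ℕ) : HasLaw (X i) (gaussianReal 0 1) ℙ :=
    ⟨.of_map_ne_zero (by rw [hdX i]; exact IsProbabilityMeasure.ne_zero _), hdX i⟩
  have hY (i : ℕ) : HasLaw (Y i) (gaussianReal 0 1) ℙ :=
    ⟨.of_map_ne_zero (by rw [hdY i]; exact IsProbabilityMeasure.ne_zero _), hdY i⟩
  have hXY (i : ℕ) : IndepFun (X i) (Y i) ℙ := by
    simpa using hindep.indepFun (Sum.inl_ne_inr (a := i) (b := i))
  have hZ : iIndepFun (fun i ω ↦ X i ω * Y i ω) ℙ :=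
    (hindep.prodMk_of_sumElim (fun i ↦ (hX i).aemeasurable) fun i ↦ (hY i).aemeasurable).comp
      (fun _ p ↦ p.1 * p.2) fun _ ↦ by fun_prop
  rw [Set.ofPred_forall]
  -- At `k = 0` both the term `1 / 0 ^ 2` (junk value `0`) and the event's probability vanish.
  refine le_trans ?_ (one_sub_le_measureReal_iInter (hasSum_zeta_two.mul_left (2 * δ)) fun k ↦ ?_)
  · have : π ^ 2 < 16 := by nlinarith [pi_lt_four, pi_pos]
    nlinarith
  rcases Nat.eq_zero_or_pos k with rfl | hk
  · simp
  have hcard : #(Icc 1 k) = k := by simp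
  have htail := measureReal_abs_sum_mul_gaussianReal_ge_le hX hY hXY hZ
    (nonempty_Icc.2 hk) hδ0 hδ1
  rw [hcard] at htail
  refine (measureReal_mono fun ω hω ↦ ?_).trans (htail.trans_eq (by ring))
  simp only [Set.mem_compl_iff, Set.mem_ofPred_eq, Classical.not_imp, not_le] at hω ⊢
  exact hω.2.le

/-- If `(X i)` and `(Y i)` are i.i.d. standard Gaussian real random variables, with the two
families mutually independent (i.e. the joint family indexed by `ℕ ⊕ ℕ` is independent), and
`0 < δ ≤ 1/2`, then with probability at least `1 - 8δ`, for every positive integer `k`,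
`|∑_{i=1}^k X i * Y i| ≤ 5 √k log(k/δ)`. -/
theorem stmt_1 {Ω : Type*} [MeasureSpace Ω] [IsProbabilityMeasure (ℙ : Measure Ω)]
    (X Y : ℕ → Ω → ℝ) (hmX : ∀ i, Measurable (X i)) (hmY : ∀ i, Measurable (Y i))
    (hindep : iIndepFun (Sum.elim X Y) ℙ)
    (hdX : ∀ i, Measure.map (X i) ℙ = gaussianReal 0 1)
    (hdY : ∀ i, Measure.map (Y i) ℙ = gaussianReal 0 1)
    (δ : ℝ) (hδ0 : 0 < δ) (hδ1 : δ ≤ 1 / 2) :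
    1 - 8 * δ ≤ (ℙ {ω | ∀ k : ℕ, 1 ≤ k →
        |∑ i ∈ Finset.Icc 1 k, X i ω * Y i ω| ≤
          5 * Real.sqrt k * Real.log (k / δ)}).toReal :=
  stmt_1_general X Y hindep hdX hdY δ hδ0 hδ1
end

section
/- Let (φ_k)_{k≥1} be a real-valued martingale difference sequence adapted to a filtration (F_k)_{k≥1} (i.e., φ_k is F_k-measurable, integrable, and E[φ_{k+1} | F_k] = 0), and let (d_k)_{k≥1} be nonnegative real constants with |φ_k| ≤ d_k almost surely for every k. Then for every 0 < δ ≤ 1/2, with probability at least 1 − 4δ, for every positive integer k, |∑_{i=1}^k φ_i| ≤ 2·√( (∑_{i=1}^k d_i²) · log(k/δ) ). -/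
/-!
Conditionally on `F k`, convexity of `exp` on `[-c, c]` bounds `exp (t * φ (k + 1))` by the affine
function `cosh (t c) + (sinh (t c) / c) · φ (k + 1)`, whose conditional expectation is
`cosh (t c) ≤ exp (t² c² / 2)`. Pulling out the `F k`-measurable factor and iterating shows that
`T k = ∑_{i=2}^k φ i` is sub-Gaussian with variance proxy `∑_{i=2}^k d i ^ 2`. The first increment
carries no centring condition, so it is split off using `|φ 1| ≤ d 1`; the threshold
`2 √((∑_{i=1}^k d i ^ 2) log (k/δ))` is large enough that the Chernoff bound for `T k` shows
the bound fails at time `k` with probability at most `2 e^{1/2} (δ/k)²`, and a union bound with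
`∑ 1/k² = π²/6` gives total failure probability at most `2 e^{1/2} δ² π²/6 ≤ 4δ` for `δ ≤ 1/2`.
-/

open MeasureTheory ProbabilityTheory Real
open scoped NNReal

namespace Real

lemma exp_mul_le_cosh_add_sinh_div_mul {c x : ℝ} (t : ℝ) (hx : |x| ≤ c) :
    exp (t * x) ≤ cosh (t * c) + sinh (t * c) / c * x := by
  rcases (abs_nonneg x).trans hx |>.eq_or_lt with rfl | hc
  · simp [abs_nonpos_iff.mp hx]
  obtain ⟨hlo, hhi⟩ := abs_le.mp hx
  -- `t * x` is the convex combination of `± t * c` with weights `(c ± x) / (2 * c)`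
  have key := convexOn_exp.2 (Set.mem_univ (t * c)) (Set.mem_univ (-(t * c)))
    (div_nonneg (by linarith) (by linarith) : 0 ≤ (c + x) / (2 * c))
    (div_nonneg (by linarith) (by linarith) : 0 ≤ (c - x) / (2 * c))
    (by field_simp; ring)
  simp only [smul_eq_mul] at key
  calc exp (t * x) = exp ((c + x) / (2 * c) * (t * c) + (c - x) / (2 * c) * -(t * c)) := by
        congr 1; field_simp; ring
    _ ≤ _ := key
    _ = cosh (t * c) + sinh (t * c) / c * x := by rw [cosh_eq, sinh_eq]; field_simp; ring

lemma le_two_sqrt_add_sq_mul {q b L : ℝ} (hb : 0 ≤ b) (hL : 1 / 4 ≤ L) :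
    q ≤ 2 * √((q ^ 2 + b) * L) := by
  calc q ≤ √(q ^ 2) := (le_abs_self q).trans_eq (sqrt_sq_eq_abs q).symm
    _ ≤ √(2 ^ 2 * ((q ^ 2 + b) * L)) := sqrt_le_sqrt (by nlinarith [sq_nonneg q])
    _ = 2 * √((q ^ 2 + b) * L) := by rw [sqrt_mul' _ (by positivity), sqrt_sq zero_le_two]

lemma mul_le_sq_two_sqrt_add_sq_mul_sub {q b L : ℝ} (hb : 0 ≤ b) (hL : 1 / 4 ≤ L) :
    (4 * L - 1) * b ≤ (2 * √((q ^ 2 + b) * L) - q) ^ 2 := by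
  set p := √((q ^ 2 + b) * L)
  have hp : p ^ 2 = (q ^ 2 + b) * L := sq_sqrt (by positivity)
  have hid : L * ((2 * p - q) ^ 2 - (4 * L - 1) * b) = (p - 2 * L * q) ^ 2 := by
    linear_combination (4 * L - 1) * hp
  nlinarith [sq_nonneg (p - 2 * L * q)]

end Real

namespace ProbabilityTheory

variable {Ω : Type*} {m0 : MeasurableSpace Ω} {μ : Measure Ω}

lemma condExp_exp_mul_ae_le [IsFiniteMeasure μ] {m : MeasurableSpace Ω} (hm : m ≤ m0)
    {X : Ω → ℝ} {c : ℝ} (hX : Integrable X μ) (hmean : μ[X | m] =ᵐ[μ] 0)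
    (hc : ∀ᵐ ω ∂μ, |X ω| ≤ c) (t : ℝ) :
    μ[fun ω ↦ exp (t * X ω) | m] ≤ᵐ[μ] fun _ ↦ exp (c ^ 2 * t ^ 2 / 2) := by
  have hmono := condExp_mono (m := m)
    (integrable_exp_mul_of_mem_Icc hX.aemeasurable
      (hc.mono fun ω h ↦ Set.mem_Icc.mpr (abs_le.mp h)))
    ((integrable_const (cosh (t * c))).add (hX.const_mul (sinh (t * c) / c)))
    (hc.mono fun ω h ↦ exp_mul_le_cosh_add_sinh_div_mul t h)
  have hlin : μ[(fun _ ↦ cosh (t * c)) + fun ω ↦ sinh (t * c) / c * X ω | m] =ᵐ[μ]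
      fun _ ↦ cosh (t * c) := by
    filter_upwards [condExp_add (m := m) (integrable_const (cosh (t * c)))
      (hX.const_mul (sinh (t * c) / c)), condExp_smul (μ := μ) (sinh (t * c) / c) X m,
      hmean] with ω hadd hsmul hzero
    change _ = (μ[fun _ ↦ cosh (t * c) | m] + μ[(sinh (t * c) / c) • X | m]) ω at hadd
    simp [hadd, condExp_const hm, hsmul, hzero]
  filter_upwards [hmono, hlin] with ω hle heq
  calc (μ[fun ω ↦ exp (t * X ω) | m]) ω ≤ cosh (t * c) := hle.trans_eq heq
    _ ≤ exp ((t * c) ^ 2 / 2) := cosh_le_exp_half_sq _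
    _ = exp (c ^ 2 * t ^ 2 / 2) := by ring_nf

lemma HasSubgaussianMGF.add_of_condExp_eq_zero [IsFiniteMeasure μ] {m : MeasurableSpace Ω}
    (hm : m ≤ m0) {X Y : Ω → ℝ} {cX : ℝ≥0} {c : ℝ} (hXm : StronglyMeasurable[m] X)
    (hX : HasSubgaussianMGF X cX μ) (hY : Integrable Y μ) (hmean : μ[Y | m] =ᵐ[μ] 0)
    (hc : ∀ᵐ ω ∂μ, |Y ω| ≤ c) :
    HasSubgaussianMGF (X + Y) (cX + (c ^ 2).toNNReal) μ := by
  have hYexp (t : ℝ) : Integrable (fun ω ↦ exp (t * Y ω)) μ :=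
    integrable_exp_mul_of_mem_Icc hY.aemeasurable (hc.mono fun _ h ↦ Set.mem_Icc.mpr (abs_le.mp h))
  have hprod (t : ℝ) : Integrable (fun ω ↦ exp (t * X ω) * exp (t * Y ω)) μ :=
    (hX.integrable_exp_mul t).mul_bdd (hYexp t).aestronglyMeasurable
      (hc.mono fun ω h ↦ by
        rw [norm_of_nonneg (exp_pos _).le, exp_le_exp]
        exact (le_abs_self _).trans ((abs_mul t (Y ω)).trans_le
          (mul_le_mul_of_nonneg_left h (abs_nonneg t))))
  have hexp_add (t : ℝ) : (fun ω ↦ exp (t * (X + Y) ω)) =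
      fun ω ↦ exp (t * X ω) * exp (t * Y ω) := by
    ext ω; rw [Pi.add_apply, mul_add, exp_add]
  refine ⟨fun t ↦ hexp_add t ▸ hprod t, fun t ↦ ?_⟩
  have hXexpm : StronglyMeasurable[m] fun ω ↦ exp (t * X ω) :=
    continuous_exp.comp_stronglyMeasurable (hXm.const_mul t)
  have hpull := condExp_mul_of_stronglyMeasurable_left hXexpm (hprod t) (hYexp t)
  calc mgf (X + Y) μ t = ∫ ω, exp (t * X ω) * exp (t * Y ω) ∂μ := by
        rw [mgf, hexp_add]
    _ = ∫ ω, exp (t * X ω) * (μ[fun ω ↦ exp (t * Y ω) | m]) ω ∂μ := by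
        rw [← integral_condExp hm]
        exact integral_congr_ae hpull
    _ ≤ ∫ ω, exp (t * X ω) * exp (c ^ 2 * t ^ 2 / 2) ∂μ := by
        refine integral_mono_ae (integrable_condExp.congr hpull)
          ((hX.integrable_exp_mul t).mul_const _) ?_
        filter_upwards [condExp_exp_mul_ae_le hm hY hmean hc t] with ω h
        exact mul_le_mul_of_nonneg_left h (exp_pos _).le
    _ = mgf X μ t * exp (c ^ 2 * t ^ 2 / 2) := integral_mul_const _ _
    _ ≤ exp (cX * t ^ 2 / 2) * exp (c ^ 2 * t ^ 2 / 2) := by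
        gcongr
        exact hX.mgf_le t
    _ = exp (↑(cX + (c ^ 2).toNNReal) * t ^ 2 / 2) := by
        rw [← exp_add, NNReal.coe_add, Real.coe_toNNReal _ (sq_nonneg c)]
        ring_nf

lemma hasSubgaussianMGF_sum_Ioc [IsZeroOrProbabilityMeasure μ] {F : Filtration ℕ m0}
    {φ : ℕ → Ω → ℝ} {d : ℕ → ℝ} {a : ℕ}
    (hadapted : ∀ i, a < i → StronglyMeasurable[F i] (φ i))
    (hint : ∀ i, a < i → Integrable (φ i) μ)
    (hmds : ∀ k, a ≤ k → μ[φ (k + 1) | F k] =ᵐ[μ] 0)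
    (hbound : ∀ i, a < i → ∀ᵐ ω ∂μ, |φ i ω| ≤ d i) {k : ℕ} (hk : a ≤ k) :
    HasSubgaussianMGF (fun ω ↦ ∑ i ∈ Finset.Ioc a k, φ i ω)
      (∑ i ∈ Finset.Ioc a k, (d i ^ 2).toNNReal) μ := by
  induction k, hk using Nat.le_induction with
  | base => simp
  | succ k hk ih =>
    have hsum : StronglyMeasurable[F k] fun ω ↦ ∑ i ∈ Finset.Ioc a k, φ i ω :=
      Finset.stronglyMeasurable_fun_sum _ fun i hi ↦
        (hadapted i (Finset.mem_Ioc.mp hi).1).mono (F.mono (Finset.mem_Ioc.mp hi).2)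
    simp_rw [Finset.sum_Ioc_succ_top hk]
    exact ih.add_of_condExp_eq_zero (F.le k) hsum (hint _ (by omega)) (hmds k hk)
      (hbound _ (by omega))

lemma HasSubgaussianMGF.measure_le_abs_le [IsFiniteMeasure μ] {X : Ω → ℝ}
    {c : ℝ≥0} (h : HasSubgaussianMGF X c μ) {ε : ℝ} (hε : 0 ≤ ε) :
    μ {ω | ε ≤ |X ω|} ≤ ENNReal.ofReal (2 * exp (-ε ^ 2 / (2 * c))) := by
  have hsub : {ω | ε ≤ |X ω|} ⊆ {ω | ε ≤ X ω} ∪ {ω | ε ≤ (-X) ω} :=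
    fun ω (hω : ε ≤ |X ω|) ↦ (le_abs'.mp hω).symm.imp id fun h ↦ by
      change ε ≤ -X ω; linarith
  calc μ {ω | ε ≤ |X ω|} ≤ μ {ω | ε ≤ X ω} + μ {ω | ε ≤ (-X) ω} :=
        (measure_mono hsub).trans (measure_union_le _ _)
    _ = ENNReal.ofReal (μ.real {ω | ε ≤ X ω} + μ.real {ω | ε ≤ (-X) ω}) := by
        rw [ENNReal.ofReal_add measureReal_nonneg measureReal_nonneg, ofReal_measureReal,
          ofReal_measureReal]
    _ ≤ ENNReal.ofReal (2 * exp (-ε ^ 2 / (2 * c))) := by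
        gcongr
        linarith [h.measure_ge_le hε, h.neg.measure_ge_le hε]

lemma HasSubgaussianMGF.measure_two_sqrt_lt_abs_add_le
    [IsProbabilityMeasure μ] {X Y : Ω → ℝ} {c : ℝ≥0} (hX : HasSubgaussianMGF X c μ) {q L : ℝ}
    (hY : ∀ᵐ ω ∂μ, |Y ω| ≤ q) (hL : 1 / 4 ≤ L) :
    μ {ω | 2 * √((q ^ 2 + c) * L) < |Y ω + X ω|} ≤
      ENNReal.ofReal (2 * exp (1 / 2 - 2 * L)) := by
  have hq := le_two_sqrt_add_sq_mul (q := q) c.2 hL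
  rcases eq_zero_or_pos c with rfl | hc
  · refine (measure_eq_zero_iff_ae_notMem.mpr ?_).trans_le zero_le
    filter_upwards [hY, hX.ae_eq_zero_of_hasSubgaussianMGF_zero] with ω hYω hXω
    simp only [hXω, Pi.zero_apply, add_zero, not_lt]
    exact hYω.trans hq
  set ε := 2 * √((q ^ 2 + c) * L) - q
  have hε : 0 ≤ ε := sub_nonneg.mpr hq
  have hε2 : (4 * L - 1) * c ≤ ε ^ 2 := mul_le_sq_two_sqrt_add_sq_mul_sub c.2 hL
  calc μ {ω | 2 * √((q ^ 2 + c) * L) < |Y ω + X ω|} ≤ μ {ω | ε ≤ |X ω|} := by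
        refine measure_mono_ae ?_
        filter_upwards [hY] with ω hYω (hω : _ < _)
        change ε ≤ |X ω|
        linarith [abs_add_le (Y ω) (X ω)]
    _ ≤ ENNReal.ofReal (2 * exp (-ε ^ 2 / (2 * c))) := hX.measure_le_abs_le hε
    _ ≤ ENNReal.ofReal (2 * exp (1 / 2 - 2 * L)) := by
        gcongr
        rw [div_le_iff₀ (by positivity)]
        linarith

lemma one_sub_tsum_le_measureReal_forall [IsProbabilityMeasure μ] {P : ℕ → Ω → Prop}
    {ε : ℕ → ℝ} (hε : ∀ k, 0 ≤ ε k) (hsum : Summable ε)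
    (h : ∀ k, μ {ω | ¬ P k ω} ≤ ENNReal.ofReal (ε k)) :
    1 - ∑' k, ε k ≤ μ.real {ω | ∀ k, P k ω} := by
  have hcompl : μ {ω | ∀ k, P k ω}ᶜ ≤ ENNReal.ofReal (∑' k, ε k) :=
    calc μ {ω | ∀ k, P k ω}ᶜ = μ (⋃ k, {ω | ¬ P k ω}) := by congr 1; ext ω; simp
      _ ≤ ∑' k, μ {ω | ¬ P k ω} := measure_iUnion_le _
      _ ≤ ∑' k, ENNReal.ofReal (ε k) := ENNReal.tsum_le_tsum h
      _ = ENNReal.ofReal (∑' k, ε k) := (ENNReal.ofReal_tsum_of_nonneg hε hsum).symm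
  have hone : 1 ≤ μ {ω | ∀ k, P k ω} + ENNReal.ofReal (∑' k, ε k) :=
    measure_univ (μ := μ) ▸ (measure_univ_le_add_compl _).trans (add_le_add_right hcompl _)
  have := ENNReal.toReal_mono (by finiteness) hone
  rw [ENNReal.toReal_add (measure_ne_top _ _) ENNReal.ofReal_ne_top,
    ENNReal.toReal_ofReal (tsum_nonneg hε)] at this
  simp only [ENNReal.toReal_one] at this
  rw [Measure.real]
  linarith

lemma measure_two_sqrt_lt_abs_sum_Icc_le [IsProbabilityMeasure μ] {F : Filtration ℕ m0}
    {φ : ℕ → Ω → ℝ} {d : ℕ → ℝ}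
    (hadapted : ∀ k, 1 ≤ k → StronglyMeasurable[F k] (φ k))
    (hint : ∀ k, 1 ≤ k → Integrable (φ k) μ)
    (hmds : ∀ k, 1 ≤ k → μ[φ (k + 1) | F k] =ᵐ[μ] 0)
    (hbound : ∀ k, 1 ≤ k → ∀ᵐ ω ∂μ, |φ k ω| ≤ d k) {k : ℕ} (hk : 1 ≤ k) {L : ℝ}
    (hL : 1 / 4 ≤ L) :
    μ {ω | 2 * √((∑ i ∈ Finset.Icc 1 k, d i ^ 2) * L) < |∑ i ∈ Finset.Icc 1 k, φ i ω|} ≤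
      ENNReal.ofReal (2 * exp (1 / 2 - 2 * L)) := by
  have hT := hasSubgaussianMGF_sum_Ioc (fun i hi ↦ hadapted i hi.le) (fun i hi ↦ hint i hi.le)
    hmds (fun i hi ↦ hbound i hi.le) hk
  have hvar : ∑ i ∈ Finset.Icc 1 k, d i ^ 2 =
      d 1 ^ 2 + ↑(∑ i ∈ Finset.Ioc 1 k, (d i ^ 2).toNNReal) := by
    simp [← Finset.add_sum_Ioc_eq_sum_Icc hk, Real.coe_toNNReal _ (sq_nonneg _)]
  simp_rw [hvar, ← Finset.add_sum_Ioc_eq_sum_Icc hk]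
  exact hT.measure_two_sqrt_lt_abs_add_le (hbound 1 le_rfl) hL


lemma measure_two_sqrt_log_lt_abs_sum_Icc_le [IsProbabilityMeasure μ] {F : Filtration ℕ m0}
    {φ : ℕ → Ω → ℝ} {d : ℕ → ℝ}
    (hadapted : ∀ k, 1 ≤ k → StronglyMeasurable[F k] (φ k))
    (hint : ∀ k, 1 ≤ k → Integrable (φ k) μ)
    (hmds : ∀ k, 1 ≤ k → μ[φ (k + 1) | F k] =ᵐ[μ] 0)
    (hbound : ∀ k, 1 ≤ k → ∀ᵐ ω ∂μ, |φ k ω| ≤ d k) {δ : ℝ} (hδ0 : 0 < δ) (hδ1 : δ ≤ 1 / 2)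
    {k : ℕ} (hk : 1 ≤ k) :
    μ {ω | 2 * √((∑ i ∈ Finset.Icc 1 k, d i ^ 2) * log (k / δ)) <
        |∑ i ∈ Finset.Icc 1 k, φ i ω|} ≤
      ENNReal.ofReal (2 * exp (1 / 2) * δ ^ 2 * (1 / (k : ℝ) ^ 2)) := by
  have hkδ : 2 ≤ (k : ℝ) / δ := by
    rw [le_div_iff₀ hδ0]
    nlinarith [(Nat.one_le_cast (α := ℝ)).mpr hk]
  have hL : 1 / 4 ≤ log (k / δ) := by
    linarith [log_two_gt_d9, log_le_log two_pos hkδ]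
  convert measure_two_sqrt_lt_abs_sum_Icc_le hadapted hint hmds hbound hk hL using 2
  rw [exp_sub, mul_comm 2 (log _), exp_mul, exp_log (by positivity), rpow_two, div_pow]
  field_simp

end ProbabilityTheory

theorem stmt_6_general {Ω : Type*} {m0 : MeasurableSpace Ω} (μ : Measure Ω) [IsProbabilityMeasure μ]
    (F : Filtration ℕ m0) (φ : ℕ → Ω → ℝ) (d : ℕ → ℝ)
    (hadapted : ∀ k, 1 ≤ k → StronglyMeasurable[F k] (φ k))
    (hint : ∀ k, 1 ≤ k → Integrable (φ k) μ)
    (hmds : ∀ k, 1 ≤ k → μ[φ (k + 1) | F k] =ᵐ[μ] 0)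
    (hbound : ∀ k, 1 ≤ k → ∀ᵐ ω ∂μ, |φ k ω| ≤ d k)
    (δ : ℝ) (hδ0 : 0 < δ) (hδ1 : δ ≤ 1 / 2) :
    1 - 4 * δ ≤ (μ {ω | ∀ k : ℕ, 1 ≤ k →
        |∑ i ∈ Finset.Icc 1 k, φ i ω| ≤
          2 * Real.sqrt ((∑ i ∈ Finset.Icc 1 k, d i ^ 2) * Real.log (k / δ))}).toReal := by
  have hexp_half : exp (1 / 2) < 2 :=
    calc exp (1 / 2) < exp (log 2) := exp_lt_exp.mpr (by linarith [log_two_gt_d9])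
      _ = 2 := exp_log two_pos
  have htail (k : ℕ) : μ {ω | ¬ (1 ≤ k → |∑ i ∈ Finset.Icc 1 k, φ i ω| ≤
      2 * √((∑ i ∈ Finset.Icc 1 k, d i ^ 2) * log (k / δ)))} ≤
      ENNReal.ofReal (2 * exp (1 / 2) * δ ^ 2 * (1 / (k : ℝ) ^ 2)) := by
    by_cases hk : 1 ≤ k
    · simpa only [hk, not_le, forall_const] using
        measure_two_sqrt_log_lt_abs_sum_Icc_le hadapted hint hmds hbound hδ0 hδ1 hk
    · simp [hk]
  have hsum := hasSum_zeta_two.mul_left (2 * exp (1 / 2) * δ ^ 2)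
  have hpi : π ^ 2 < 10 := by nlinarith [pi_lt_d2, pi_pos]
  calc 1 - 4 * δ ≤ 1 - 2 * 2 * δ ^ 2 * (10 / 6) := by nlinarith
    _ ≤ 1 - 2 * exp (1 / 2) * δ ^ 2 * (π ^ 2 / 6) := by gcongr
    _ = 1 - ∑' k : ℕ, 2 * exp (1 / 2) * δ ^ 2 * (1 / (k : ℝ) ^ 2) := by rw [hsum.tsum_eq]
    _ ≤ _ := one_sub_tsum_le_measureReal_forall (fun k ↦ by positivity) hsum.summable htail

/-- Time-uniform Azuma–Hoeffding inequality: if `(φ k)_{k ≥ 1}` is a martingale difference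
sequence adapted to the filtration `(F k)` with `|φ k| ≤ d k` a.s., then for `0 < δ ≤ 1/2`,
with probability at least `1 - 4δ`, for every positive integer `k`,
`|∑_{i=1}^k φ i| ≤ 2 √((∑_{i=1}^k d i ^ 2) log(k/δ))`. -/
theorem stmt_6 {Ω : Type*} {m0 : MeasurableSpace Ω} (μ : Measure Ω) [IsProbabilityMeasure μ]
    (F : Filtration ℕ m0) (φ : ℕ → Ω → ℝ) (d : ℕ → ℝ)
    (hadapted : ∀ k, 1 ≤ k → StronglyMeasurable[F k] (φ k))
    (hint : ∀ k, 1 ≤ k → Integrable (φ k) μ)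
    (hmds : ∀ k, 1 ≤ k → μ[φ (k + 1) | F k] =ᵐ[μ] 0)
    (hd : ∀ k, 1 ≤ k → 0 ≤ d k)
    (hbound : ∀ k, 1 ≤ k → ∀ᵐ ω ∂μ, |φ k ω| ≤ d k)
    (δ : ℝ) (hδ0 : 0 < δ) (hδ1 : δ ≤ 1 / 2) :
    1 - 4 * δ ≤ (μ {ω | ∀ k : ℕ, 1 ≤ k →
        |∑ i ∈ Finset.Icc 1 k, φ i ω| ≤
          2 * Real.sqrt ((∑ i ∈ Finset.Icc 1 k, d i ^ 2) * Real.log (k / δ))}).toReal :=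
  stmt_6_general μ F φ d hadapted hint hmds hbound δ hδ0 hδ1
end

section
/- Let (φ_k)_{k≥1} be a real-valued martingale difference sequence adapted to a filtration (F_k)_{k≥1}, let C > 0, and let 0 < δ ≤ 1/6 be such that |φ_k| ≤ (C/2)·log(k/δ) almost surely for every k. Then with probability at least 1 − 4δ, for every positive integer k, |∑_{i=1}^k φ_i| ≤ C·√k·(log(k/δ))². -/
/-!
The first summand `φ 1` is bounded by `(C/2) log(1/δ)` but need not be centred, so it is split
off; the rest, `∑_{i=2}^k φ i`, is a martingale with increments bounded by `b = (C/2) log(k/δ)`.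
By convexity `exp (t x) ≤ cosh (t b) + (sinh (t b) / b) x` on `[-b, b]`, so conditioning on `F i`
one step at a time bounds its moment generating function by `cosh (t b) ^ (k - 1)`, hence by
`exp ((k - 1) b² t² / 2)`: it is sub-Gaussian (Azuma–Hoeffding). The Chernoff bound then makes
`|∑_{i=1}^k φ i| > C √k log(k/δ)²` have probability at most `2 (δ/k)²`, and a union bound over `k`
costs `2 δ² π²/6 ≤ 4 δ`.
-/

open MeasureTheory ProbabilityTheory Real Finset

theorem Real.exp_mul_le_cosh_add_sinh_mul_of_abs_le {b x : ℝ} (t : ℝ) (hb : 0 < b)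
    (hx : |x| ≤ b) : exp (t * x) ≤ cosh (t * b) + sinh (t * b) / b * x := by
  obtain ⟨hx₁, hx₂⟩ := abs_le.mp hx
  -- `t * x` is the convex combination of `∓ t * b` with weights `(b ∓ x) / (2 * b)`.
  have h := convexOn_exp.2 (Set.mem_univ (-(t * b))) (Set.mem_univ (t * b))
    (div_nonneg (by linarith) (by positivity) : 0 ≤ (b - x) / (2 * b))
    (div_nonneg (by linarith) (by positivity) : 0 ≤ (b + x) / (2 * b))
    (by field_simp; ring)
  have hcomb : (b - x) / (2 * b) * -(t * b) + (b + x) / (2 * b) * (t * b) = t * x := by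
    field_simp; ring
  simp only [smul_eq_mul, hcomb] at h
  refine h.trans_eq ?_
  rw [cosh_eq, sinh_eq, exp_neg]
  field_simp
  ring

/- With `s = √k`, `L = log (k/δ)`, `ℓ = log (1/δ)` and `N = k - 1` the right-hand side is the
Chernoff exponent `ε² / (2 N b²)` of the threshold left after removing `φ 1`; being `≥ 2 L`, it
makes the tail at most `(δ/k)²`. -/
theorem two_mul_le_deviation_sq_div {C s L ℓ N : ℝ} (hC : 0 < C) (hs : 1 ≤ s) (hL : 2 ≤ L)
    (hℓ : ℓ ≤ L) (hN₀ : 0 < N) (hN : N ≤ s ^ 2) :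
    2 * L ≤ (C * s * L ^ 2 - C / 2 * ℓ) ^ 2 / (2 * (N * (C / 2 * L) ^ 2)) := by
  have hsL₀ : 0 ≤ s * L - 1 / 2 := by nlinarith
  have hε : C * L * (s * L - 1 / 2) ≤ C * s * L ^ 2 - C / 2 * ℓ := by nlinarith
  have hsL : s ^ 2 * L ≤ (s * L - 1 / 2) ^ 2 := by
    have : 1 ≤ s * (L - 1) := by nlinarith
    nlinarith [mul_nonneg (by linarith : 0 ≤ s) (by linarith : 0 ≤ L)]
  rw [le_div_iff₀ (by positivity)]
  calc 2 * L * (2 * (N * (C / 2 * L) ^ 2)) ≤ (C * L) ^ 2 * (s ^ 2 * L) := by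
        have : 0 ≤ L ^ 3 * C ^ 2 := by positivity
        nlinarith
    _ ≤ (C * L) ^ 2 * (s * L - 1 / 2) ^ 2 := by gcongr
    _ = (C * L * (s * L - 1 / 2)) ^ 2 := by ring
    _ ≤ _ := pow_le_pow_left₀ (by positivity) hε 2

section

variable {Ω : Type*} {m m0 : MeasurableSpace Ω} {μ : Measure Ω}

theorem integrable_exp_mul_sum [IsFiniteMeasure μ] {ι : Type*} {s : Finset ι}
    {f : ι → Ω → ℝ} {b : ℝ} (hf : ∀ i ∈ s, AEMeasurable (f i) μ)
    (hfb : ∀ i ∈ s, ∀ᵐ ω ∂μ, |f i ω| ≤ b) (t : ℝ) :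
    Integrable (fun ω => exp (t * ∑ i ∈ s, f i ω)) μ := by
  refine integrable_exp_mul_of_mem_Icc (a := -(#s * b)) (b := #s * b)
    (Finset.aemeasurable_fun_sum s hf) ?_
  filter_upwards [(Filter.eventually_all_finset s).2 hfb] with ω hω
  refine abs_le.mp ?_
  calc |∑ i ∈ s, f i ω| ≤ ∑ i ∈ s, |f i ω| := abs_sum_le_sum_abs _ _
    _ ≤ #s * b := by simpa using sum_le_card_nsmul s _ b hω

theorem condExp_exp_mul_ae_le_cosh [IsFiniteMeasure μ] (hm : m ≤ m0) {X : Ω → ℝ} {b : ℝ}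
    (hb : 0 < b) (hX : AEMeasurable X μ) (hXb : ∀ᵐ ω ∂μ, |X ω| ≤ b) (hX0 : μ[X|m] =ᵐ[μ] 0)
    (t : ℝ) : μ[fun ω => exp (t * X ω)|m] ≤ᵐ[μ] fun _ => cosh (t * b) := by
  have hXIcc : ∀ᵐ ω ∂μ, X ω ∈ Set.Icc (-b) b := hXb.mono fun ω h => abs_le.mp h
  have hXint : Integrable X μ := .of_mem_Icc (-b) b hX hXIcc
  have hle : (fun ω => exp (t * X ω)) ≤ᵐ[μ] (fun _ => cosh (t * b)) + (sinh (t * b) / b) • X :=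
    hXb.mono fun ω h => exp_mul_le_cosh_add_sinh_mul_of_abs_le t hb h
  filter_upwards [condExp_mono (m := m) (integrable_exp_mul_of_mem_Icc hX hXIcc)
      ((integrable_const _).add (hXint.smul _)) hle,
    condExp_add (integrable_const (cosh (t * b))) (hXint.smul (sinh (t * b) / b)) m,
    condExp_smul (μ := μ) (sinh (t * b) / b) X m, hX0] with ω hmono hadd hsmul hzero
  simpa [hadd, hsmul, hzero, condExp_const hm] using hmono

theorem integral_exp_mul_sum_Ioc_le_cosh_pow [IsProbabilityMeasure μ] {F : Filtration ℕ m0}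
    {ψ : ℕ → Ω → ℝ} {a : ℕ} {b : ℝ} (hb : 0 < b)
    (hadapted : ∀ i, a < i → StronglyMeasurable[F i] (ψ i))
    (hmds : ∀ i, a ≤ i → μ[ψ (i + 1)|F i] =ᵐ[μ] 0) (t : ℝ) {n : ℕ} (han : a ≤ n)
    (hbound : ∀ i ∈ Ioc a n, ∀ᵐ ω ∂μ, |ψ i ω| ≤ b) :
    ∫ ω, exp (t * ∑ i ∈ Ioc a n, ψ i ω) ∂μ ≤ cosh (t * b) ^ (n - a) := by
  induction n, han using Nat.le_induction with
  | base => simp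
  | succ n han ih =>
    have hmeas : ∀ i ∈ Ioc a (n + 1), AEMeasurable (ψ i) μ := fun i hi =>
      ((hadapted i (mem_Ioc.1 hi).1).mono (F.le i)).aemeasurable
    have hS : StronglyMeasurable[F n] fun ω => exp (t * ∑ i ∈ Ioc a n, ψ i ω) := by
      refine continuous_exp.comp_stronglyMeasurable (.const_mul ?_ t)
      refine Finset.stronglyMeasurable_fun_sum _ fun i hi => ?_
      exact (hadapted i (mem_Ioc.1 hi).1).mono (F.mono (mem_Ioc.1 hi).2)
    have hψ : Integrable (fun ω => exp (t * ψ (n + 1) ω)) μ := by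
      simpa using integrable_exp_mul_sum (s := {n + 1})
        (by simpa using hmeas (n + 1) (by simp; omega))
        (by simpa using hbound (n + 1) (by simp; omega)) t
    have hprod : Integrable (fun ω => exp (t * ∑ i ∈ Ioc a n, ψ i ω) *
        exp (t * ψ (n + 1) ω)) μ := by
      simpa [sum_Ioc_succ_top han, mul_add, exp_add] using integrable_exp_mul_sum hmeas hbound t
    have hcond := condExp_exp_mul_ae_le_cosh (F.le n) hb (hmeas (n + 1) (by simp; omega))
      (hbound (n + 1) (by simp; omega)) (hmds n han) t
    have hpull := condExp_mul_of_stronglyMeasurable_left hS hprod hψ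
    calc ∫ ω, exp (t * ∑ i ∈ Ioc a (n + 1), ψ i ω) ∂μ
        = ∫ ω, μ[(fun ω => exp (t * ∑ i ∈ Ioc a n, ψ i ω)) *
            fun ω => exp (t * ψ (n + 1) ω)|F n] ω ∂μ := by
          rw [integral_condExp (F.le n)]
          simp [sum_Ioc_succ_top han, mul_add, exp_add]
      _ ≤ ∫ ω, exp (t * ∑ i ∈ Ioc a n, ψ i ω) * cosh (t * b) ∂μ := by
          refine integral_mono_ae integrable_condExp ?_ ?_
          · exact (integrable_exp_mul_sum
              (fun i hi => hmeas i (Ioc_subset_Ioc_right (by omega) hi))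
              (fun i hi => hbound i (Ioc_subset_Ioc_right (by omega) hi)) t).mul_const _
          filter_upwards [hpull, hcond] with ω h1 h2
          rw [h1]
          exact mul_le_mul_of_nonneg_left h2 (exp_pos _).le
      _ = (∫ ω, exp (t * ∑ i ∈ Ioc a n, ψ i ω) ∂μ) * cosh (t * b) := integral_mul_const _ _
      _ ≤ cosh (t * b) ^ (n - a) * cosh (t * b) :=
          mul_le_mul_of_nonneg_right
            (ih fun i hi => hbound i (Ioc_subset_Ioc_right (by omega) hi)) (cosh_pos _).le
      _ = cosh (t * b) ^ (n + 1 - a) := by rw [← pow_succ, Nat.sub_add_comm han]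

theorem hasSubgaussianMGF_sum_Ioc [IsProbabilityMeasure μ] {F : Filtration ℕ m0}
    {ψ : ℕ → Ω → ℝ} {a n : ℕ} {b : ℝ} (hb : 0 < b)
    (hadapted : ∀ i, a < i → StronglyMeasurable[F i] (ψ i))
    (hmds : ∀ i, a ≤ i → μ[ψ (i + 1)|F i] =ᵐ[μ] 0) (han : a ≤ n)
    (hbound : ∀ i ∈ Ioc a n, ∀ᵐ ω ∂μ, |ψ i ω| ≤ b) :
    HasSubgaussianMGF (fun ω => ∑ i ∈ Ioc a n, ψ i ω) (((n - a : ℕ) : ℝ) * b ^ 2).toNNReal μ where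
  integrable_exp_mul := integrable_exp_mul_sum
    (fun i hi => ((hadapted i (mem_Ioc.1 hi).1).mono (F.le i)).aemeasurable) hbound
  mgf_le t := calc
    mgf _ μ t ≤ cosh (t * b) ^ (n - a) :=
      integral_exp_mul_sum_Ioc_le_cosh_pow hb hadapted hmds t han hbound
    _ ≤ exp ((t * b) ^ 2 / 2) ^ (n - a) :=
      pow_le_pow_left₀ (cosh_pos _).le (cosh_le_exp_half_sq _) _
    _ = exp ((((n - a : ℕ) : ℝ) * b ^ 2).toNNReal * t ^ 2 / 2) := by
      rw [← exp_nat_mul, Real.coe_toNNReal _ (by positivity)]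
      ring_nf

theorem measure_abs_sum_Icc_gt_le [IsProbabilityMeasure μ] {F : Filtration ℕ m0}
    {φ : ℕ → Ω → ℝ} {C δ : ℝ} (hC : 0 < C) (hδ0 : 0 < δ)
    (hδ1 : δ ≤ 1 / 6) (hadapted : ∀ k, 1 ≤ k → StronglyMeasurable[F k] (φ k))
    (hmds : ∀ k, 1 ≤ k → μ[φ (k + 1)|F k] =ᵐ[μ] 0)
    (hbound : ∀ k : ℕ, 1 ≤ k → ∀ᵐ ω ∂μ, |φ k ω| ≤ C / 2 * log (k / δ)) {k : ℕ} (hk : 2 ≤ k) :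
    μ {ω | ¬ |∑ i ∈ Icc 1 k, φ i ω| ≤ C * √k * log (k / δ) ^ 2} ≤
      ENNReal.ofReal (2 * δ ^ 2 * (1 / k ^ 2)) := by
  set L := log (k / δ)
  set ε := C * √k * L ^ 2 - C / 2 * log (1 / δ) with hε_def
  set T := fun ω => ∑ i ∈ Ioc 1 k, φ i ω
  have hk' : (2 : ℝ) ≤ k := by exact_mod_cast hk
  have hL : 2 ≤ L := by
    rw [le_log_iff_exp_le (by positivity), le_div_iff₀ hδ0]
    have : exp 2 ≤ 9 := calc
      exp 2 = exp 1 ^ 2 := by rw [← exp_nat_mul]; norm_num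
      _ ≤ 3 ^ 2 := by gcongr; exact exp_one_lt_three.le
      _ = 9 := by norm_num
    nlinarith
  have hlog : log (1 / δ) ≤ L := log_le_log (by positivity) (by gcongr; linarith)
  have hs : 1 ≤ √(k : ℝ) := one_le_sqrt.2 (by linarith)
  have hε : 0 ≤ ε := by
    have h₁ := mul_le_mul_of_nonneg_left hs (by positivity : 0 ≤ C * L ^ 2)
    have h₂ := mul_le_mul_of_nonneg_left hlog (by positivity : 0 ≤ C / 2)
    have h₃ : 0 ≤ C * L * (L - 1 / 2) := mul_nonneg (by positivity) (by linarith)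
    rw [hε_def]
    linarith
  have hT := hasSubgaussianMGF_sum_Ioc (by positivity : 0 < C / 2 * L)
    (fun i hi => hadapted i hi.le) hmds (by omega : 1 ≤ k) fun i hi => by
      filter_upwards [hbound i (mem_Ioc.1 hi).1.le] with ω hω
      have hi' : (2 : ℝ) ≤ i := by exact_mod_cast (mem_Ioc.1 hi).1
      refine hω.trans ?_
      show C / 2 * log (i / δ) ≤ C / 2 * log (k / δ)
      gcongr
      exact_mod_cast (mem_Ioc.1 hi).2
  have htail : exp (-ε ^ 2 / (2 * (((k - 1 : ℕ) : ℝ) * (C / 2 * L) ^ 2).toNNReal)) ≤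
      δ ^ 2 * (1 / k ^ 2) := by
    have hN : (((k - 1 : ℕ) : ℝ)) ≤ √k ^ 2 := by
      rw [sq_sqrt (by positivity)]; exact_mod_cast Nat.sub_le k 1
    have hN₀ : (0 : ℝ) < ((k - 1 : ℕ) : ℝ) := by exact_mod_cast (by omega : 0 < k - 1)
    calc _ ≤ exp (-(2 * L)) := by
          rw [Real.coe_toNNReal _ (by positivity), exp_le_exp, neg_div, neg_le_neg_iff]
          exact two_mul_le_deviation_sq_div hC hs hL hlog hN₀ hN
      _ = δ ^ 2 * (1 / k ^ 2) := by
          rw [show -(2 * L) = -L + -L by ring, exp_add, exp_neg, exp_log (by positivity)]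
          field_simp
  have hsub : {ω | ¬ |∑ i ∈ Icc 1 k, φ i ω| ≤ C * √k * L ^ 2} ≤ᵐ[μ]
      ({ω | ε ≤ T ω} ∪ {ω | ε ≤ (-T) ω} : Set Ω) := by
    filter_upwards [hbound 1 le_rfl]
      with ω hω (hbad : ¬ |∑ i ∈ Icc 1 k, φ i ω| ≤ C * √k * L ^ 2)
    have hsplit : ∑ i ∈ Icc 1 k, φ i ω = φ 1 ω + T ω :=
      (add_sum_Ioc_eq_sum_Icc (by omega)).symm
    simp only [Nat.cast_one] at hω
    have : ε < |T ω| := by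
      have := abs_add_le (φ 1 ω) (T ω)
      rw [hsplit] at hbad
      linarith
    rcases lt_abs.1 this with h | h
    · exact Or.inl h.le
    · exact Or.inr h.le
  calc _ ≤ μ ({ω | ε ≤ T ω} ∪ {ω | ε ≤ (-T) ω}) := measure_mono_ae hsub
    _ ≤ μ {ω | ε ≤ T ω} + μ {ω | ε ≤ (-T) ω} := measure_union_le _ _
    _ = ENNReal.ofReal (μ.real {ω | ε ≤ T ω}) + ENNReal.ofReal (μ.real {ω | ε ≤ (-T) ω}) := by
      rw [ofReal_measureReal, ofReal_measureReal]
    _ ≤ ENNReal.ofReal (δ ^ 2 * (1 / k ^ 2)) + ENNReal.ofReal (δ ^ 2 * (1 / k ^ 2)) := by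
      gcongr
      · exact (hT.measure_ge_le hε).trans htail
      · exact (hT.neg.measure_ge_le hε).trans htail
    _ = ENNReal.ofReal (2 * δ ^ 2 * (1 / k ^ 2)) := by
      rw [← ENNReal.ofReal_add (by positivity) (by positivity)]; ring_nf

theorem measure_abs_sum_Icc_one_gt_eq_zero {φ : ℕ → Ω → ℝ} {C δ : ℝ} (hδ0 : 0 < δ)
    (hδ1 : δ ≤ 1 / 6) (hbound : ∀ k : ℕ, 1 ≤ k → ∀ᵐ ω ∂μ, |φ k ω| ≤ C / 2 * log (k / δ)) :
    μ {ω | ¬ |∑ i ∈ Icc 1 1, φ i ω| ≤ C * √(1 : ℕ) * log ((1 : ℕ) / δ) ^ 2} = 0 := by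
  have hlog : 1 ≤ log (1 / δ) := by
    rw [le_log_iff_exp_le (by positivity), le_div_iff₀ hδ0]
    nlinarith [exp_one_lt_three]
  refine measure_eq_zero_iff_ae_notMem.2 ?_
  filter_upwards [hbound 1 le_rfl] with ω hω
  simp only [Icc_self, sum_singleton, Nat.cast_one, sqrt_one] at hω ⊢
  exact fun h => h (by nlinarith [abs_nonneg (φ 1 ω)])

theorem le_measureReal_of_measure_compl_le [IsProbabilityMeasure μ] {s : Set Ω} {ε : ℝ}
    (hε : 0 ≤ ε) (hs : μ sᶜ ≤ ENNReal.ofReal ε) : 1 - ε ≤ μ.real s := by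
  have h := measureReal_union_le (μ := μ) s sᶜ
  rw [Set.union_compl_self, probReal_univ] at h
  have hc : μ.real sᶜ ≤ ε := ENNReal.toReal_le_of_le_ofReal hε hs
  linarith

end

theorem stmt_7_general {Ω : Type*} {m0 : MeasurableSpace Ω} (μ : Measure Ω) [IsProbabilityMeasure μ]
    (F : Filtration ℕ m0) (φ : ℕ → Ω → ℝ) (C δ : ℝ) (hC : 0 < C)
    (hδ0 : 0 < δ) (hδ1 : δ ≤ 1 / 6)
    (hadapted : ∀ k, 1 ≤ k → StronglyMeasurable[F k] (φ k))
    (hmds : ∀ k, 1 ≤ k → μ[φ (k + 1) | F k] =ᵐ[μ] 0)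
    (hbound : ∀ k : ℕ, 1 ≤ k → ∀ᵐ ω ∂μ, |φ k ω| ≤ C / 2 * Real.log (k / δ)) :
    1 - 4 * δ ≤ (μ {ω | ∀ k : ℕ, 1 ≤ k →
        |∑ i ∈ Finset.Icc 1 k, φ i ω| ≤
          C * Real.sqrt k * Real.log (k / δ) ^ 2}).toReal := by
  have hbad : ∀ k : ℕ, μ {ω | 1 ≤ k ∧ ¬ |∑ i ∈ Icc 1 k, φ i ω| ≤ C * √k * log (k / δ) ^ 2} ≤
      ENNReal.ofReal (2 * δ ^ 2 * (1 / k ^ 2)) := by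
    rintro (_ | _ | k)
    · simp
    · exact (measure_mono fun ω hω => hω.2).trans
        ((measure_abs_sum_Icc_one_gt_eq_zero hδ0 hδ1 hbound).trans_le bot_le)
    · exact (measure_mono fun ω hω => hω.2).trans
        (measure_abs_sum_Icc_gt_le hC hδ0 hδ1 hadapted hmds hbound (by omega))
  refine le_measureReal_of_measure_compl_le (by positivity) ?_
  calc μ {ω | ∀ k : ℕ, 1 ≤ k → |∑ i ∈ Icc 1 k, φ i ω| ≤ C * √k * log (k / δ) ^ 2}ᶜ
      = μ (⋃ k : ℕ, {ω | 1 ≤ k ∧ ¬ |∑ i ∈ Icc 1 k, φ i ω| ≤ C * √k * log (k / δ) ^ 2}) := by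
        congr 1; ext ω; simp
    _ ≤ ∑' k : ℕ, ENNReal.ofReal (2 * δ ^ 2 * (1 / k ^ 2)) :=
        (measure_iUnion_le _).trans (ENNReal.tsum_le_tsum hbad)
    _ = ENNReal.ofReal (2 * δ ^ 2 * (π ^ 2 / 6)) := by
        rw [← ENNReal.ofReal_tsum_of_nonneg (fun k => by positivity)
          (hasSum_zeta_two.mul_left _).summable, (hasSum_zeta_two.mul_left _).tsum_eq]
    _ ≤ ENNReal.ofReal (4 * δ) := by
        have : π ^ 2 < 10 := by nlinarith [pi_lt_d2, pi_pos]
        exact ENNReal.ofReal_le_ofReal (by nlinarith)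

/-- If `(φ k)_{k ≥ 1}` is a martingale difference sequence adapted to the filtration `(F k)`,
`C > 0`, `0 < δ ≤ 1/6`, and `|φ k| ≤ (C/2) log(k/δ)` a.s. for every `k ≥ 1`, then with
probability at least `1 - 4δ`, for every positive integer `k`,
`|∑_{i=1}^k φ i| ≤ C √k (log(k/δ))²`. -/
theorem stmt_7 {Ω : Type*} {m0 : MeasurableSpace Ω} (μ : Measure Ω) [IsProbabilityMeasure μ]
    (F : Filtration ℕ m0) (φ : ℕ → Ω → ℝ) (C δ : ℝ) (hC : 0 < C)
    (hδ0 : 0 < δ) (hδ1 : δ ≤ 1 / 6)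
    (hadapted : ∀ k, 1 ≤ k → StronglyMeasurable[F k] (φ k))
    (hint : ∀ k, 1 ≤ k → Integrable (φ k) μ)
    (hmds : ∀ k, 1 ≤ k → μ[φ (k + 1) | F k] =ᵐ[μ] 0)
    (hbound : ∀ k : ℕ, 1 ≤ k → ∀ᵐ ω ∂μ, |φ k ω| ≤ C / 2 * Real.log (k / δ)) :
    1 - 4 * δ ≤ (μ {ω | ∀ k : ℕ, 1 ≤ k →
        |∑ i ∈ Finset.Icc 1 k, φ i ω| ≤
          C * Real.sqrt k * Real.log (k / δ) ^ 2}).toReal :=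
  stmt_7_general μ F φ C δ hC hδ0 hδ1 hadapted hmds hbound
end

section
/- Let X be a real random variable with Gaussian distribution N(μ, σ²), and let ν > 0 satisfy σ ≥ ν. Then ℙ(|X| ≥ ν) ≥ 3/10. -/
/-! The event `|X| < ν` is the event that a standard Gaussian falls in an interval of length
`2ν/σ ≤ 2`. The standard density is even and decreasing in `|x|`, so among intervals of length `2`
the centred one `[-1, 1]` carries the most mass: the part of a window sticking out of `[-1, 1]` on
one side is a translate, towards larger `|x|`, of the part of `[-1, 1]` it misses on the other.
Finally `e^{-t} ≤ 1 - t + t²/2` bounds the mass of `[-1, 1]` by `103 / (60 √(2π)) < 7/10`. -/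

open MeasureTheory ProbabilityTheory Real Set

section SymmetricUnimodal

variable {f : ℝ → ℝ} {r : ℝ}

lemma intervalIntegral_window_le_centered_of_neg_le (hf : ∀ x y, |x| ≤ |y| → f y ≤ f x)
    (hfi : Integrable f) (hr : 0 ≤ r) {a : ℝ} (ha : -r ≤ a) :
    ∫ x in a..a + 2 * r, f x ≤ ∫ x in -r..r, f x := by
  have hii : ∀ b c, IntervalIntegrable f volume b c := fun _ _ ↦ hfi.intervalIntegrable
  have hshift : ∫ x in r..a + 2 * r, f x = ∫ x in -r..a, f (x + 2 * r) := by
    rw [intervalIntegral.integral_comp_add_right, show -r + 2 * r = r by ring]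
  have hle : ∫ x in -r..a, f (x + 2 * r) ≤ ∫ x in -r..a, f x :=
    intervalIntegral.integral_mono_on ha (hfi.comp_add_right _).intervalIntegrable (hii _ _)
      fun x hx ↦ hf _ _ (abs_le_abs (by linarith) (by linarith [hx.1]))
  rw [← intervalIntegral.integral_add_adjacent_intervals (hii a r) (hii r _),
    ← intervalIntegral.integral_add_adjacent_intervals (hii (-r) a) (hii a r)]
  linarith

lemma intervalIntegral_window_le_centered (hf : ∀ x y, |x| ≤ |y| → f y ≤ f x)
    (hfi : Integrable f) (hr : 0 ≤ r) (a : ℝ) :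
    ∫ x in a..a + 2 * r, f x ≤ ∫ x in -r..r, f x := by
  rcases le_or_gt (-r) a with ha | ha
  · exact intervalIntegral_window_le_centered_of_neg_le hf hfi hr ha
  · have hf_even : ∀ x, f (-x) = f x := fun x ↦
      le_antisymm (hf _ _ (abs_neg x).ge) (hf _ _ (abs_neg x).le)
    have hreflect :
        ∫ x in a..a + 2 * r, f x = ∫ x in -(a + 2 * r)..-(a + 2 * r) + 2 * r, f x := by
      rw [show -(a + 2 * r) + 2 * r = -a by ring, ← intervalIntegral.integral_comp_neg]
      simp only [hf_even]
    rw [hreflect]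
    exact intervalIntegral_window_le_centered_of_neg_le hf hfi hr (by linarith)

end SymmetricUnimodal

lemma gaussianPDFReal_le_of_abs_sub_le {μ : ℝ} (v : NNReal) {x y : ℝ} (h : |x - μ| ≤ |y - μ|) :
    gaussianPDFReal μ v y ≤ gaussianPDFReal μ v x := by
  unfold gaussianPDFReal
  gcongr _ * exp ?_
  exact div_le_div_of_nonneg_right (neg_le_neg (sq_le_sq.2 h)) (by positivity)

lemma exp_neg_le_one_sub_add_sq_div_two {t : ℝ} (ht : 0 ≤ t) : exp (-t) ≤ 1 - t + t ^ 2 / 2 := by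
  have hq : 0 < 1 + t + t ^ 2 / 2 := by positivity
  calc exp (-t) = (exp t)⁻¹ := exp_neg t
    _ ≤ (1 + t + t ^ 2 / 2)⁻¹ := inv_anti₀ hq (quadratic_le_exp_of_nonneg ht)
    _ ≤ 1 - t + t ^ 2 / 2 := by
      rw [inv_le_iff_one_le_mul₀ hq]
      nlinarith [pow_nonneg ht 4]

lemma gaussianPDFReal_zero_one_le_taylor (x : ℝ) :
    gaussianPDFReal 0 1 x ≤ (√(2 * π))⁻¹ * (1 - x ^ 2 / 2 + x ^ 4 / 8) := by
  simp only [gaussianPDFReal, NNReal.coe_one, mul_one, sub_zero, neg_div]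
  gcongr
  exact (exp_neg_le_one_sub_add_sq_div_two (by positivity)).trans_eq (by ring)

lemma integral_gaussianPDFReal_neg_one_one_le :
    ∫ x in -1..1, gaussianPDFReal 0 1 x ≤ 7 / 10 := by
  have hpoly : ∫ x in (-1 : ℝ)..1, (1 - x ^ 2 / 2 + x ^ 4 / 8) = 103 / 60 := by
    rw [intervalIntegral.integral_add, intervalIntegral.integral_sub,
      intervalIntegral.integral_div, intervalIntegral.integral_div]
    all_goals norm_num [integral_pow]
  have hsqrt : 103 / 42 ≤ √(2 * π) :=
    le_sqrt_of_sq_le (by nlinarith [pi_gt_d2])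
  calc ∫ x in -1..1, gaussianPDFReal 0 1 x
      ≤ ∫ x in (-1 : ℝ)..1, (√(2 * π))⁻¹ * (1 - x ^ 2 / 2 + x ^ 4 / 8) :=
        intervalIntegral.integral_mono_on (by norm_num)
          (integrable_gaussianPDFReal 0 1).intervalIntegrable
          ((by fun_prop : Continuous _).intervalIntegrable _ _) fun x _ ↦
          gaussianPDFReal_zero_one_le_taylor x
    _ = (√(2 * π))⁻¹ * (103 / 60) := by rw [intervalIntegral.integral_const_mul, hpoly]
    _ ≤ 7 / 10 := by
      rw [inv_mul_le_iff₀ (by positivity)]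
      linarith

lemma measureReal_gaussianReal_Icc_add_two_le (a : ℝ) :
    (gaussianReal 0 1).real (Icc a (a + 2)) ≤ 7 / 10 := by
  rw [measureReal_def, gaussianReal_apply_eq_integral 0 one_ne_zero,
    ENNReal.toReal_ofReal (setIntegral_nonneg measurableSet_Icc fun x _ ↦
      gaussianPDFReal_nonneg _ _ _),
    integral_Icc_eq_integral_Ioc, ← intervalIntegral.integral_of_le (by linarith)]
  calc ∫ x in a..a + 2, gaussianPDFReal 0 1 x ≤ ∫ x in -1..1, gaussianPDFReal 0 1 x := by
        simpa using intervalIntegral_window_le_centered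
          (fun x y h ↦ gaussianPDFReal_le_of_abs_sub_le 1 (by simpa using h))
          (integrable_gaussianPDFReal 0 1) zero_le_one a
    _ ≤ 7 / 10 := integral_gaussianPDFReal_neg_one_one_le

lemma gaussianReal_eq_map_standard (m σ : ℝ) :
    gaussianReal m (⟨σ ^ 2, sq_nonneg σ⟩ : NNReal) =
      (gaussianReal 0 1).map (fun y ↦ σ * y + m) := by
  rw [show (fun y ↦ σ * y + m) = (· + m) ∘ (σ * ·) from rfl,
    ← Measure.map_map (measurable_add_const m) (measurable_const_mul σ),
    gaussianReal_map_const_mul, gaussianReal_map_add_const, mul_zero, zero_add, mul_one]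
  rfl

lemma three_tenths_le_measureReal_gaussianReal_le_abs {m σ ν : ℝ} (hσ : 0 < σ) (hνσ : ν ≤ σ) :
    3 / 10 ≤ (gaussianReal m (⟨σ ^ 2, sq_nonneg σ⟩ : NNReal)).real {x | ν ≤ |x|} := by
  set a := (-ν - m) / σ
  have hsub : (Icc a (a + 2))ᶜ ⊆ (fun y ↦ σ * y + m) ⁻¹' {x | ν ≤ |x|} := by
    intro y hy
    by_contra hlt
    simp only [mem_preimage, mem_ofPred_eq, not_le, abs_lt] at hlt
    refine hy ⟨?_, ?_⟩
    · rw [div_le_iff₀ hσ]; linarith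
    · rw [div_add' _ _ _ hσ.ne', le_div_iff₀ hσ]; linarith
  rw [gaussianReal_eq_map_standard,
    map_measureReal_apply (by fun_prop) (measurableSet_le (by fun_prop) (by fun_prop))]
  calc 3 / 10 ≤ 1 - (gaussianReal 0 1).real (Icc a (a + 2)) := by
        linarith [measureReal_gaussianReal_Icc_add_two_le a]
    _ = (gaussianReal 0 1).real (Icc a (a + 2))ᶜ :=
        (probReal_compl_eq_one_sub measurableSet_Icc).symm
    _ ≤ _ := measureReal_mono hsub

theorem stmt_8_general {Ω : Type*} [MeasureSpace Ω]
    (X : Ω → ℝ) (m σ ν : ℝ) (hν : 0 < ν) (hσ : ν ≤ σ)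
    (hX : Measure.map X ℙ = gaussianReal m (⟨σ ^ 2, sq_nonneg σ⟩ : NNReal)) :
    3 / 10 ≤ (ℙ {ω | ν ≤ |X ω|}).toReal := by
  have hlaw : HasLaw X (gaussianReal m (⟨σ ^ 2, sq_nonneg σ⟩ : NNReal)) :=
    ⟨aemeasurable_of_map_neZero <| by
      rw [hX]; exact (instIsProbabilityMeasureGaussianReal _ _).neZero, hX⟩
  rw [← measureReal_def, hlaw.measureReal_eq (p := fun x ↦ ν ≤ |x|)
    (measurableSet_le (by fun_prop) (by fun_prop))]
  exact three_tenths_le_measureReal_gaussianReal_le_abs (hν.trans_le hσ) hσ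

/-- If `X ~ N(μ, σ²)` and `0 < ν ≤ σ`, then `ℙ(|X| ≥ ν) ≥ 3/10`. -/
theorem stmt_8 {Ω : Type*} [MeasureSpace Ω] [IsProbabilityMeasure (ℙ : Measure Ω)]
    (X : Ω → ℝ) (m σ ν : ℝ) (hν : 0 < ν) (hσ : ν ≤ σ)
    (hX : Measure.map X ℙ = gaussianReal m (⟨σ ^ 2, sq_nonneg σ⟩ : NNReal)) :
    3 / 10 ≤ (ℙ {ω | ν ≤ |X ω|}).toReal :=
  stmt_8_general X m σ ν hν hσ hX
end

section
/- Let P be a symmetric positive definite real n×n matrix, let 0 ≤ ρ < 1, and let A_0, A_1, …, A_{k−1} be real n×n matrices such that A_iᵀ P A_i ⪯ ρ·P for every 0 ≤ i ≤ k−1. Let x_0, …, x_k and w_0, …, w_{k−1} be vectors in ℝⁿ with x_{i+1} = A_i x_i + w_i for 0 ≤ i ≤ k−1. Then ‖x_k‖_P ≤ ρ^{k/2}·‖x_0‖_P + ∑_{i=0}^{k−1} ρ^{(k−1−i)/2}·‖w_i‖_P. -/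
/-
Write `q = √ρ`. The hypothesis `Aᵢᵀ P Aᵢ ⪯ ρ P` says exactly that `‖Aᵢ v‖_P ≤ q ‖v‖_P`, and
`‖·‖_P` is the seminorm of the inner product `⟪u, v⟫ = uᵀ P v`, so it satisfies the triangle
inequality. Hence `‖x_{i+1}‖_P ≤ q ‖x_i‖_P + ‖w_i‖_P`, and unrolling this scalar recursion gives
`‖x_k‖_P ≤ q^k ‖x_0‖_P + ∑_{i<k} q^(k-1-i) ‖w_i‖_P`, which is the claim since `q^m = ρ^(m/2)`.
-/

open Matrix

/-- The `P`-weighted norm `‖v‖_P = √(vᵀ P v)` of a vector `v ∈ ℝⁿ`. -/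
noncomputable def normP {n : ℕ} (P : Matrix (Fin n) (Fin n) ℝ) (v : Fin n → ℝ) : ℝ :=
  Real.sqrt (v ⬝ᵥ P.mulVec v)

open Finset

theorem le_pow_mul_add_sum_of_le_mul_add {u g : ℕ → ℝ} {q : ℝ} (hq : 0 ≤ q) {k : ℕ}
    (h : ∀ i < k, u (i + 1) ≤ q * u i + g i) :
    u k ≤ q ^ k * u 0 + ∑ i ∈ range k, q ^ (k - 1 - i) * g i := by
  induction k with
  | zero => simp
  | succ k ih =>
    have ih := ih fun i hi => h i (by omega)
    calc u (k + 1) ≤ q * u k + g k := h k k.lt_succ_self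
      _ ≤ q * (q ^ k * u 0 + ∑ i ∈ range k, q ^ (k - 1 - i) * g i) + g k := by gcongr
      _ = q ^ (k + 1) * u 0 + ∑ i ∈ range (k + 1), q ^ (k + 1 - 1 - i) * g i := by
        rw [sum_range_succ, mul_add, mul_sum, ← mul_assoc, ← pow_succ', Nat.add_sub_cancel,
          Nat.sub_self, pow_zero, one_mul, add_assoc]
        congr 2
        refine sum_congr rfl fun i hi => ?_
        rw [← mul_assoc, ← pow_succ']
        congr 2
        have := mem_range.mp hi
        omega

theorem Real.rpow_natCast_div_two {ρ : ℝ} (hρ : 0 ≤ ρ) (m : ℕ) : ρ ^ ((m : ℝ) / 2) = √ρ ^ m := by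
  rw [Real.sqrt_eq_rpow, ← Real.rpow_natCast, ← Real.rpow_mul hρ]
  ring_nf

section normP

variable {n : ℕ} {P : Matrix (Fin n) (Fin n) ℝ}

theorem normP_eq_norm (hP : P.PosSemidef) (v : Fin n → ℝ) :
    normP P v = @norm _ (P.toSeminormedAddCommGroup hP).toNorm v := by
  rw [normP, dotProduct_comm]
  rfl

theorem normP_add_le (hP : P.PosSemidef) (u v : Fin n → ℝ) :
    normP P (u + v) ≤ normP P u + normP P v := by
  simp only [normP_eq_norm hP]
  exact @norm_add_le _ (P.toSeminormedAddCommGroup hP).toSeminormedAddGroup u v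

theorem normP_mulVec_le {A : Matrix (Fin n) (Fin n) ℝ} {ρ : ℝ} (hρ : 0 ≤ ρ)
    (hA : (ρ • P - Aᵀ * P * A).PosSemidef) (v : Fin n → ℝ) :
    normP P (A *ᵥ v) ≤ √ρ * normP P v := by
  have hquad : A *ᵥ v ⬝ᵥ P *ᵥ (A *ᵥ v) ≤ ρ * (v ⬝ᵥ P *ᵥ v) := by
    have := hA.dotProduct_mulVec_nonneg v
    simpa only [star_trivial, sub_mulVec, dotProduct_sub, smul_mulVec, dotProduct_smul,
      smul_eq_mul, sub_nonneg, ← mulVec_mulVec, dotProduct_mulVec _ Aᵀ, vecMul_transpose]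
      using this
  rw [normP, normP, ← Real.sqrt_mul hρ]
  exact Real.sqrt_le_sqrt hquad

end normP

theorem stmt_10_general {n : ℕ} (P : Matrix (Fin n) (Fin n) ℝ) (hP : P.PosDef)
    (ρ : ℝ) (hρ0 : 0 ≤ ρ) (k : ℕ)
    (A : ℕ → Matrix (Fin n) (Fin n) ℝ)
    (hA : ∀ i < k, (ρ • P - (A i)ᵀ * P * A i).PosSemidef)
    (x w : ℕ → Fin n → ℝ)
    (hx : ∀ i < k, x (i + 1) = (A i).mulVec (x i) + w i) :
    normP P (x k) ≤ ρ ^ ((k : ℝ) / 2) * normP P (x 0) +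
      ∑ i ∈ Finset.range k, ρ ^ (((k : ℝ) - 1 - (i : ℝ)) / 2) * normP P (w i) := by
  have hstep : ∀ i < k, normP P (x (i + 1)) ≤ √ρ * normP P (x i) + normP P (w i) := by
    intro i hi
    rw [hx i hi]
    grw [normP_add_le hP.posSemidef, normP_mulVec_le hρ0 (hA i hi)]
  calc normP P (x k)
      ≤ √ρ ^ k * normP P (x 0) + ∑ i ∈ range k, √ρ ^ (k - 1 - i) * normP P (w i) :=
        le_pow_mul_add_sum_of_le_mul_add (u := fun i ↦ normP P (x i)) (g := fun i ↦ normP P (w i))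
          (Real.sqrt_nonneg ρ) hstep
    _ = _ := by
      rw [← Real.rpow_natCast_div_two hρ0]
      refine congrArg _ (sum_congr rfl fun i hi => ?_)
      have := mem_range.mp hi
      rw [← Real.rpow_natCast_div_two hρ0, Nat.sub_sub, Nat.cast_sub (by omega), Nat.cast_add,
        Nat.cast_one, sub_sub]

/-- If `P ≻ 0`, `0 ≤ ρ < 1`, the matrices `A i` satisfy `A iᵀ P (A i) ⪯ ρ P` for `i < k`, and
`x (i+1) = A i x i + w i` for `i < k`, then
`‖x k‖_P ≤ ρ^{k/2} ‖x 0‖_P + ∑_{i<k} ρ^{(k-1-i)/2} ‖w i‖_P`. -/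
theorem stmt_10 {n : ℕ} (P : Matrix (Fin n) (Fin n) ℝ) (hP : P.PosDef)
    (ρ : ℝ) (hρ0 : 0 ≤ ρ) (hρ1 : ρ < 1) (k : ℕ)
    (A : ℕ → Matrix (Fin n) (Fin n) ℝ)
    (hA : ∀ i < k, (ρ • P - (A i)ᵀ * P * A i).PosSemidef)
    (x w : ℕ → Fin n → ℝ)
    (hx : ∀ i < k, x (i + 1) = (A i).mulVec (x i) + w i) :
    normP P (x k) ≤ ρ ^ ((k : ℝ) / 2) * normP P (x 0) +
      ∑ i ∈ Finset.range k, ρ ^ (((k : ℝ) - 1 - (i : ℝ)) / 2) * normP P (w i) :=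
  stmt_10_general P hP ρ hρ0 k A hA x w hx
end

section
/- Let A be a real n×n matrix, P a symmetric positive definite real n×n matrix, 0 ≤ ρ < 1 with Aᵀ P A ⪯ ρ·P, let 0 < δ ≤ 1/2 and D ≥ 0. Let (x_k)_{k≥1} and (d_k)_{k≥1} be sequences in ℝⁿ with x_1 = 0, x_{k+1} = A x_k + d_k for all k ≥ 1, and ‖d_k‖ ≤ D·log(k/δ) for all k ≥ 1. Then for every k ≥ 1, ‖x_k‖ ≤ √(λ_max(P)/λ_min(P)) · (D / (1 − ρ^{1/2})) · log(k/δ), where λ_max(P) and λ_min(P) denote the largest and smallest eigenvalues of P. -/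
/-!
Work in the norm `‖v‖_P = ‖P^{1/2} v‖`. The hypothesis `Aᵀ P A ⪯ ρ P` says that `A` contracts
this norm by `√ρ`, and `λ_min ‖v‖² ≤ ‖v‖_P² ≤ λ_max ‖v‖²`. Hence
`‖x_{k+1}‖_P ≤ √ρ ‖x_k‖_P + √λ_max D log(k/δ)`, and since `log(k/δ)` is nonnegative and
nondecreasing, `b_k = √λ_max D/(1 - √ρ) log(k/δ)` is an invariant bound for `‖x_k‖_P`.
Dividing by `√λ_min` gives the claim.
-/

open Matrix

/-- The Euclidean (2-)norm of a vector in `ℝⁿ`. -/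
noncomputable def eNorm {n : ℕ} (v : Fin n → ℝ) : ℝ := Real.sqrt (∑ j, v j ^ 2)

open scoped MatrixOrder

namespace Matrix

variable {ι : Type*} [Fintype ι]

lemma dotProduct_mulVec_le_of_le {M N : Matrix ι ι ℝ} (h : M ≤ N) (v : ι → ℝ) :
    v ⬝ᵥ M *ᵥ v ≤ v ⬝ᵥ N *ᵥ v := by
  simpa [sub_mulVec, dotProduct_sub] using (le_iff.mp h).dotProduct_mulVec_nonneg v

variable [DecidableEq ι] {P : Matrix ι ι ℝ}

lemma IsHermitian.le_iSup_eigenvalues_smul_one (hP : P.IsHermitian) :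
    P ≤ (⨆ i, hP.eigenvalues i) • (1 : Matrix ι ι ℝ) := by
  rw [← Algebra.algebraMap_eq_smul_one]
  refine le_algebraMap_of_spectrum_le (fun x hx => ?_) hP.isSelfAdjoint
  obtain ⟨i, rfl⟩ := hP.spectrum_real_eq_range_eigenvalues ▸ hx
  exact le_ciSup (Set.finite_range _).bddAbove i

lemma IsHermitian.iInf_eigenvalues_smul_one_le (hP : P.IsHermitian) :
    (⨅ i, hP.eigenvalues i) • (1 : Matrix ι ι ℝ) ≤ P := by
  rw [← Algebra.algebraMap_eq_smul_one]
  refine algebraMap_le_of_le_spectrum (fun x hx => ?_) hP.isSelfAdjoint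
  obtain ⟨i, rfl⟩ := hP.spectrum_real_eq_range_eigenvalues ▸ hx
  exact ciInf_le (Set.finite_range _).bddBelow i

lemma PosDef.iInf_eigenvalues_pos [Nonempty ι] (hP : P.PosDef) :
    0 < ⨅ i, hP.1.eigenvalues i := by
  obtain ⟨i, hi⟩ := Finite.exists_min hP.1.eigenvalues
  exact (hP.eigenvalues_pos i).trans_le (le_ciInf hi)

lemma PosSemidef.transpose_sqrt_mul_sqrt (hP : P.PosSemidef) :
    (CFC.sqrt P)ᵀ * CFC.sqrt P = P := by
  have hS : (CFC.sqrt P)ᴴ = CFC.sqrt P := (nonneg_iff_posSemidef.mp (CFC.sqrt_nonneg P)).1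
  rw [← conjTranspose_eq_transpose_of_trivial, hS, CFC.sqrt_mul_sqrt_self P hP.nonneg]

end Matrix

section eNorm

variable {m n : ℕ}

lemma eNorm_eq_norm_toLp (v : Fin n → ℝ) : eNorm v = ‖WithLp.toLp 2 v‖ := by
  simp [eNorm, EuclideanSpace.norm_eq]

lemma eNorm_nonneg (v : Fin n → ℝ) : 0 ≤ eNorm v := Real.sqrt_nonneg _

lemma eNorm_zero : eNorm (0 : Fin n → ℝ) = 0 := by simp [eNorm]

lemma eNorm_add_le (u v : Fin n → ℝ) : eNorm (u + v) ≤ eNorm u + eNorm v := by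
  simpa only [eNorm_eq_norm_toLp, WithLp.toLp_add] using norm_add_le _ _

lemma eNorm_sq (v : Fin n → ℝ) : eNorm v ^ 2 = v ⬝ᵥ v := by
  rw [eNorm, Real.sq_sqrt (by positivity)]
  simp [dotProduct, sq]

lemma eNorm_mulVec_sq (M : Matrix (Fin m) (Fin n) ℝ) (v : Fin n → ℝ) :
    eNorm (M *ᵥ v) ^ 2 = v ⬝ᵥ (Mᵀ * M) *ᵥ v := by
  rw [eNorm_sq, ← mulVec_mulVec, dotProduct_mulVec v, vecMul_transpose]

lemma eNorm_mulVec_le_sqrt_mul {k : ℕ} {M : Matrix (Fin m) (Fin n) ℝ}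
    {N : Matrix (Fin k) (Fin n) ℝ} {c : ℝ} (hc : 0 ≤ c) (h : Mᵀ * M ≤ c • (Nᵀ * N))
    (v : Fin n → ℝ) : eNorm (M *ᵥ v) ≤ √c * eNorm (N *ᵥ v) := by
  rw [← sq_le_sq₀ (eNorm_nonneg _) (mul_nonneg (Real.sqrt_nonneg c) (eNorm_nonneg _)), mul_pow,
    Real.sq_sqrt hc, eNorm_mulVec_sq, eNorm_mulVec_sq, ← smul_eq_mul, ← dotProduct_smul,
    ← smul_mulVec]
  exact dotProduct_mulVec_le_of_le h v

lemma sqrt_mul_eNorm_mulVec_le {k : ℕ} {M : Matrix (Fin m) (Fin n) ℝ}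
    {N : Matrix (Fin k) (Fin n) ℝ} {c : ℝ} (hc : 0 ≤ c) (h : c • (Nᵀ * N) ≤ Mᵀ * M)
    (v : Fin n → ℝ) : √c * eNorm (N *ᵥ v) ≤ eNorm (M *ᵥ v) := by
  rw [← sq_le_sq₀ (mul_nonneg (Real.sqrt_nonneg c) (eNorm_nonneg _)) (eNorm_nonneg _), mul_pow,
    Real.sq_sqrt hc, eNorm_mulVec_sq, eNorm_mulVec_sq, ← smul_eq_mul, ← dotProduct_smul,
    ← smul_mulVec]
  exact dotProduct_mulVec_le_of_le h v

end eNorm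

namespace Matrix.PosSemidef

variable {n : ℕ} {P : Matrix (Fin n) (Fin n) ℝ}

lemma eNorm_sqrt_mulVec_le (hP : P.PosSemidef) (v : Fin n → ℝ) :
    eNorm (CFC.sqrt P *ᵥ v) ≤ √(⨆ i, hP.1.eigenvalues i) * eNorm v := by
  have hmax : 0 ≤ ⨆ i, hP.1.eigenvalues i := Real.iSup_nonneg hP.eigenvalues_nonneg
  simpa using eNorm_mulVec_le_sqrt_mul (M := CFC.sqrt P) (N := (1 : Matrix (Fin n) (Fin n) ℝ))
    hmax (by simpa [hP.transpose_sqrt_mul_sqrt] using hP.1.le_iSup_eigenvalues_smul_one) v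

lemma sqrt_iInf_eigenvalues_mul_eNorm_le (hP : P.PosSemidef) (v : Fin n → ℝ) :
    √(⨅ i, hP.1.eigenvalues i) * eNorm v ≤ eNorm (CFC.sqrt P *ᵥ v) := by
  have hmin : 0 ≤ ⨅ i, hP.1.eigenvalues i := Real.iInf_nonneg hP.eigenvalues_nonneg
  simpa using sqrt_mul_eNorm_mulVec_le (M := CFC.sqrt P) (N := (1 : Matrix (Fin n) (Fin n) ℝ))
    hmin (by simpa [hP.transpose_sqrt_mul_sqrt] using hP.1.iInf_eigenvalues_smul_one_le) v

lemma eNorm_sqrt_mulVec_mulVec_le (hP : P.PosSemidef) {A : Matrix (Fin n) (Fin n) ℝ} {c : ℝ}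
    (hc : 0 ≤ c) (hA : Aᵀ * P * A ≤ c • P) (v : Fin n → ℝ) :
    eNorm (CFC.sqrt P *ᵥ A *ᵥ v) ≤ √c * eNorm (CFC.sqrt P *ᵥ v) := by
  rw [mulVec_mulVec]
  refine eNorm_mulVec_le_sqrt_mul hc ?_ v
  rwa [transpose_mul, Matrix.mul_assoc, ← Matrix.mul_assoc (CFC.sqrt P)ᵀ,
    hP.transpose_sqrt_mul_sqrt, ← Matrix.mul_assoc]

end Matrix.PosSemidef

lemma le_of_succ_le_mul_add_one_sub_mul {a b : ℕ → ℝ} {c : ℝ} (hc : 0 ≤ c)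
    (hb : ∀ k, 1 ≤ k → b k ≤ b (k + 1))
    (ha : ∀ k, 1 ≤ k → a (k + 1) ≤ c * a k + (1 - c) * b k) (h1 : a 1 ≤ b 1) :
    ∀ k, 1 ≤ k → a k ≤ b k := by
  intro k hk
  induction k, hk using Nat.le_induction with
  | base => exact h1
  | succ k hk ih => calc
      a (k + 1) ≤ c * a k + (1 - c) * b k := ha k hk
      _ ≤ c * b k + (1 - c) * b k := by gcongr
      _ = b k := by ring
      _ ≤ b (k + 1) := hb k hk

/-- If `P ≻ 0`, `Aᵀ P A ⪯ ρ P` with `0 ≤ ρ < 1`, `0 < δ ≤ 1/2`, `D ≥ 0`, and the sequence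
`x` satisfies `x 1 = 0`, `x (k+1) = A x k + d k` with `‖d k‖ ≤ D log(k/δ)` for `k ≥ 1`, then
for every `k ≥ 1`, `‖x k‖ ≤ √(λ_max(P)/λ_min(P)) · D/(1 - ρ^{1/2}) · log(k/δ)`. -/
theorem stmt_11 {n : ℕ} (hn : 0 < n)
    (A P : Matrix (Fin n) (Fin n) ℝ) (hP : P.PosDef)
    (ρ : ℝ) (hρ0 : 0 ≤ ρ) (hρ1 : ρ < 1)
    (hA : (ρ • P - Aᵀ * P * A).PosSemidef)
    (δ D : ℝ) (hδ0 : 0 < δ) (hδ1 : δ ≤ 1 / 2) (hD : 0 ≤ D)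
    (x d : ℕ → Fin n → ℝ) (hx1 : x 1 = 0)
    (hxk : ∀ k : ℕ, 1 ≤ k → x (k + 1) = A.mulVec (x k) + d k)
    (hd : ∀ k : ℕ, 1 ≤ k → eNorm (d k) ≤ D * Real.log (k / δ)) :
    ∀ k : ℕ, 1 ≤ k → eNorm (x k) ≤
      Real.sqrt ((⨆ i, hP.1.eigenvalues i) / (⨅ i, hP.1.eigenvalues i)) *
        (D / (1 - Real.sqrt ρ)) * Real.log (k / δ) := by
  have : Nonempty (Fin n) := Fin.pos_iff_nonempty.mp hn
  set S := CFC.sqrt P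
  set lmax := ⨆ i, hP.1.eigenvalues i
  have hgap : 0 < 1 - √ρ := sub_pos.mpr ((Real.sqrt_lt' one_pos).mpr (by linarith))
  have hlog_one : 0 ≤ Real.log (1 / δ) := Real.log_nonneg ((one_le_div hδ0).mpr (by linarith))
  have hS : ∀ k : ℕ, 1 ≤ k →
      eNorm (S *ᵥ x k) ≤ √lmax * (D / (1 - √ρ)) * Real.log (k / δ) := by
    refine le_of_succ_le_mul_add_one_sub_mul (Real.sqrt_nonneg ρ)
      (fun k hk => ?mono) (fun k hk => ?step) ?base
    case mono =>
      gcongr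
      omega
    case step =>
      rw [hxk k hk, mulVec_add]
      calc eNorm (S *ᵥ A *ᵥ x k + S *ᵥ d k)
          ≤ eNorm (S *ᵥ A *ᵥ x k) + eNorm (S *ᵥ d k) := eNorm_add_le _ _
        _ ≤ √ρ * eNorm (S *ᵥ x k) + √lmax * eNorm (d k) :=
          add_le_add (hP.posSemidef.eNorm_sqrt_mulVec_mulVec_le hρ0 (le_iff.mpr hA) _)
            (hP.posSemidef.eNorm_sqrt_mulVec_le _)
        _ ≤ √ρ * eNorm (S *ᵥ x k) + √lmax * (D * Real.log (k / δ)) := by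
          gcongr
          exact hd k hk
        _ = _ := by field_simp
    case base =>
      rw [hx1, mulVec_zero, eNorm_zero, Nat.cast_one]
      positivity
  intro k hk
  have hmin := hP.iInf_eigenvalues_pos
  rw [Real.sqrt_div' _ hmin.le, div_mul_eq_mul_div, div_mul_eq_mul_div,
    le_div_iff₀ (Real.sqrt_pos.mpr hmin), mul_comm]
  exact (hP.posSemidef.sqrt_iInf_eigenvalues_mul_eNorm_le _).trans (hS k hk)
end

section
/- Let A be a real n×n matrix, B a real n×m matrix, Q and P symmetric real n×n matrices, R a symmetric real m×m matrix, and K* a real m×n matrix satisfying (i) Q + K*ᵀ R K* + (A + B K*)ᵀ P (A + B K*) − P = 0 and (ii) (R + Bᵀ P B) K* + Bᵀ P A = 0. Let T be a positive integer and let x_1, …, x_{T+1} ∈ ℝⁿ, K_1, …, K_T real m×n matrices, u^{pr}_1, …, u^{pr}_T ∈ ℝᵐ, and w_1, …, w_T ∈ ℝⁿ be given; set u^{cb}_k = K_k x_k, u_k = u^{cb}_k + u^{pr}_k, s_k = B u^{pr}_k + w_k, and assume x_{k+1} = A x_k + B u_k + w_k for 1 ≤ k ≤ T. Then ∑_{k=1}^T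 (x_kᵀ Q x_k + u_kᵀ R u_k) − T·tr(P) = R₁ + R₂ + R₃ + R₄ + R₅ + R₆ + R₇, where R₁ = ∑_{k=1}^T x_kᵀ (K_k − K*)ᵀ (R + Bᵀ P B)(K_k − K*) x_k, R₂ = 2·∑_{k=1}^T (u^{pr}_k)ᵀ Bᵀ P (A + B K_k) x_k, R₃ = 2·∑_{k=1}^T w_kᵀ P (A + B K_k) x_k, R₄ = ∑_{k=1}^T (s_kᵀ P s_k − w_kᵀ P w_k), R₅ = ∑_{k=1}^T w_kᵀ P w_k − T·tr(P), R₆ = x_1ᵀ P x_1 − x_{T+1}ᵀ P x_{T+1}, and R₇ = ∑_{k=1}^T ( 2·(u^{pr}_k)ᵀ R u^{cb}_k + (u^{pr}_k)ᵀ R u^{pr}_k ). -/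
open Matrix

/-- Pathwise regret decomposition for LQR: under the closed-loop Lyapunov equation and
optimality condition for `(P, K*)`, and the dynamics `x_{k+1} = A x_k + B u_k + w_k` with
`u_k = K_k x_k + u^{pr}_k`, the regret `∑_{k=1}^T (x_kᵀ Q x_k + u_kᵀ R u_k) - T tr(P)`
decomposes as `R₁ + R₂ + R₃ + R₄ + R₅ + R₆ + R₇`. -/
theorem stmt_15 {n m : ℕ}
    (A Q P : Matrix (Fin n) (Fin n) ℝ) (B : Matrix (Fin n) (Fin m) ℝ)
    (R : Matrix (Fin m) (Fin m) ℝ) (Kstar : Matrix (Fin m) (Fin n) ℝ)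
    (hQ : Q.IsSymm) (hP : P.IsSymm) (hR : R.IsSymm)
    (h1 : Q + Kstarᵀ * R * Kstar + (A + B * Kstar)ᵀ * P * (A + B * Kstar) - P = 0)
    (h2 : (R + Bᵀ * P * B) * Kstar + Bᵀ * P * A = 0)
    (T : ℕ) (hT : 1 ≤ T)
    (x w : ℕ → Fin n → ℝ) (K : ℕ → Matrix (Fin m) (Fin n) ℝ)
    (upr ucb u : ℕ → Fin m → ℝ) (s : ℕ → Fin n → ℝ)
    (hucb : ∀ k, ucb k = (K k).mulVec (x k))
    (hu : ∀ k, u k = ucb k + upr k)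
    (hs : ∀ k, s k = B.mulVec (upr k) + w k)
    (hdyn : ∀ k, 1 ≤ k → k ≤ T →
      x (k + 1) = A.mulVec (x k) + B.mulVec (u k) + w k) :
    (∑ k ∈ Finset.Icc 1 T, (x k ⬝ᵥ Q.mulVec (x k) + u k ⬝ᵥ R.mulVec (u k)))
        - (T : ℝ) * P.trace =
      (∑ k ∈ Finset.Icc 1 T,
          x k ⬝ᵥ ((K k - Kstar)ᵀ * (R + Bᵀ * P * B) * (K k - Kstar)).mulVec (x k))
      + 2 * (∑ k ∈ Finset.Icc 1 T, upr k ⬝ᵥ (Bᵀ * P * (A + B * K k)).mulVec (x k))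
      + 2 * (∑ k ∈ Finset.Icc 1 T, w k ⬝ᵥ (P * (A + B * K k)).mulVec (x k))
      + (∑ k ∈ Finset.Icc 1 T, (s k ⬝ᵥ P.mulVec (s k) - w k ⬝ᵥ P.mulVec (w k)))
      + ((∑ k ∈ Finset.Icc 1 T, w k ⬝ᵥ P.mulVec (w k)) - (T : ℝ) * P.trace)
      + (x 1 ⬝ᵥ P.mulVec (x 1) - x (T + 1) ⬝ᵥ P.mulVec (x (T + 1)))
      + (∑ k ∈ Finset.Icc 1 T,
          (2 * (upr k ⬝ᵥ R.mulVec (ucb k)) + upr k ⬝ᵥ R.mulVec (upr k))) := by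
  have hPt : Pᵀ = P := hP
  have hRt : Rᵀ = R := hR
  -- the two optimality facts
  have hZ1 : Bᵀ * P * A + (R + Bᵀ * P * B) * Kstar = 0 := by rw [add_comm]; exact h2
  have hZ2 : Aᵀ * P * B + Kstarᵀ * (R + Bᵀ * P * B) = 0 := by
    have h := congrArg Matrix.transpose hZ1
    simp only [transpose_add, transpose_mul, transpose_transpose, hPt, hRt,
      transpose_zero] at h
    simp only [Matrix.mul_assoc]
    exact h
  have hQe : Q = P - Kstarᵀ * R * Kstar - (A + B * Kstar)ᵀ * P * (A + B * Kstar) := by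
    have h1' : Q + Kstarᵀ * R * Kstar + (A + B * Kstar)ᵀ * P * (A + B * Kstar) = P := by
      rwa [sub_eq_zero] at h1
    rw [sub_sub, eq_sub_iff_add_eq, ← add_assoc]
    exact h1'
  -- completion of squares, matrix form
  have key : ∀ k : ℕ,
      Q + (K k)ᵀ * R * (K k) + (A + B * K k)ᵀ * P * (A + B * K k) - P
        = (K k - Kstar)ᵀ * (R + Bᵀ * P * B) * (K k - Kstar) := by
    intro k
    rw [← sub_eq_zero, hQe]
    have expand :
        (P - Kstarᵀ * R * Kstar - (A + B * Kstar)ᵀ * P * (A + B * Kstar)) + (K k)ᵀ * R * (K k)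
          + (A + B * K k)ᵀ * P * (A + B * K k) - P
          - (K k - Kstar)ᵀ * (R + Bᵀ * P * B) * (K k - Kstar)
        = (K k)ᵀ * (Bᵀ * P * A + (R + Bᵀ * P * B) * Kstar)
          + (Aᵀ * P * B + Kstarᵀ * (R + Bᵀ * P * B)) * (K k)
          - Kstarᵀ * (Bᵀ * P * A + (R + Bᵀ * P * B) * Kstar)
          - (Aᵀ * P * B + Kstarᵀ * (R + Bᵀ * P * B)) * Kstar := by
      simp only [transpose_sub, transpose_add, transpose_mul, Matrix.sub_mul, Matrix.mul_sub,
        Matrix.add_mul, Matrix.mul_add, Matrix.mul_assoc]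
      abel
    rw [expand, hZ1, hZ2]
    simp
  -- scalar helpers
  have mdot : ∀ {p q : ℕ} (M : Matrix (Fin p) (Fin q) ℝ) (a : Fin q → ℝ) (v : Fin p → ℝ),
      a ⬝ᵥ Mᵀ.mulVec v = M.mulVec a ⬝ᵥ v := by
    intro p q M a v
    rw [dotProduct_mulVec, vecMul_transpose]
  have conj : ∀ {p : ℕ} (M : Matrix (Fin p) (Fin n) ℝ) (N : Matrix (Fin p) (Fin p) ℝ)
      (v : Fin n → ℝ), v ⬝ᵥ (Mᵀ * N * M).mulVec v = M.mulVec v ⬝ᵥ N.mulVec (M.mulVec v) := by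
    intro p M N v
    rw [← mulVec_mulVec, ← mulVec_mulVec, mdot]
  have swapP : ∀ (a b : Fin n → ℝ), a ⬝ᵥ P.mulVec b = b ⬝ᵥ P.mulVec a := by
    intro a b
    rw [← hPt, mdot, dotProduct_comm, hPt]
  have swapR : ∀ (a b : Fin m → ℝ), a ⬝ᵥ R.mulVec b = b ⬝ᵥ R.mulVec a := by
    intro a b
    rw [← hRt, mdot, dotProduct_comm, hRt]
  have quadP : ∀ (a b : Fin n → ℝ), (a + b) ⬝ᵥ P.mulVec (a + b)
      = a ⬝ᵥ P.mulVec a + 2 * (b ⬝ᵥ P.mulVec a) + b ⬝ᵥ P.mulVec b := by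
    intro a b
    rw [mulVec_add, dotProduct_add, add_dotProduct, add_dotProduct, swapP a b]; ring
  have quadR : ∀ (a b : Fin m → ℝ), (a + b) ⬝ᵥ R.mulVec (a + b)
      = a ⬝ᵥ R.mulVec a + 2 * (b ⬝ᵥ R.mulVec a) + b ⬝ᵥ R.mulVec b := by
    intro a b
    rw [mulVec_add, dotProduct_add, add_dotProduct, add_dotProduct, swapR a b]; ring
  -- per-step identity
  have hper : ∀ k ∈ Finset.Icc 1 T,
      x k ⬝ᵥ Q.mulVec (x k) + u k ⬝ᵥ R.mulVec (u k)
        = x k ⬝ᵥ ((K k - Kstar)ᵀ * (R + Bᵀ * P * B) * (K k - Kstar)).mulVec (x k)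
          + 2 * (upr k ⬝ᵥ (Bᵀ * P * (A + B * K k)).mulVec (x k))
          + 2 * (w k ⬝ᵥ (P * (A + B * K k)).mulVec (x k))
          + s k ⬝ᵥ P.mulVec (s k)
          + (2 * (upr k ⬝ᵥ R.mulVec (ucb k)) + upr k ⬝ᵥ R.mulVec (upr k))
          + (x k ⬝ᵥ P.mulVec (x k) - x (k + 1) ⬝ᵥ P.mulVec (x (k + 1))) := by
    intro k hk
    obtain ⟨hk1, hk2⟩ := Finset.mem_Icc.mp hk
    set y := (A + B * K k).mulVec (x k) with hy
    have hx1 : x (k + 1) = y + s k := by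
      rw [hdyn k hk1 hk2, hs, hu, hucb, hy, add_mulVec, ← mulVec_mulVec, mulVec_add]
      abel
    -- key applied to x k
    have hkey : x k ⬝ᵥ Q.mulVec (x k) + ucb k ⬝ᵥ R.mulVec (ucb k)
        + y ⬝ᵥ P.mulVec y - x k ⬝ᵥ P.mulVec (x k)
        = x k ⬝ᵥ ((K k - Kstar)ᵀ * (R + Bᵀ * P * B) * (K k - Kstar)).mulVec (x k) := by
      have h := congrArg (fun M => x k ⬝ᵥ M.mulVec (x k)) (key k)
      simp only [add_mulVec, sub_mulVec, dotProduct_add, dotProduct_sub] at h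
      rw [conj, conj] at h
      rw [← h, hucb, hy]
    -- r2, r3 rewrites
    have hr2 : upr k ⬝ᵥ (Bᵀ * P * (A + B * K k)).mulVec (x k)
        = B.mulVec (upr k) ⬝ᵥ P.mulVec y := by
      rw [Matrix.mul_assoc, ← mulVec_mulVec, ← mulVec_mulVec, mdot, hy]
    have hr3 : w k ⬝ᵥ (P * (A + B * K k)).mulVec (x k) = w k ⬝ᵥ P.mulVec y := by
      rw [← mulVec_mulVec, hy]
    have hq : x (k + 1) ⬝ᵥ P.mulVec (x (k + 1))
        = y ⬝ᵥ P.mulVec y + 2 * (s k ⬝ᵥ P.mulVec y) + s k ⬝ᵥ P.mulVec (s k) := by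
      rw [hx1, quadP]
    have hsP : s k ⬝ᵥ P.mulVec y = B.mulVec (upr k) ⬝ᵥ P.mulVec y + w k ⬝ᵥ P.mulVec y := by
      rw [hs, add_dotProduct]
    have huR : u k ⬝ᵥ R.mulVec (u k)
        = ucb k ⬝ᵥ R.mulVec (ucb k) + 2 * (upr k ⬝ᵥ R.mulVec (ucb k))
          + upr k ⬝ᵥ R.mulVec (upr k) := by
      rw [hu, quadR]
    rw [hr2, hr3, hq, huR, ← hkey]
    rw [hsP]
    ring
  -- telescoping
  have tele : ∀ (F : ℕ → ℝ) (N : ℕ),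
      ∑ k ∈ Finset.Icc 1 N, (F k - F (k + 1)) = F 1 - F (N + 1) := by
    intro F N
    induction N with
    | zero => simp
    | succ t ih => rw [Finset.sum_Icc_succ_top (by omega), ih]; ring
  rw [Finset.sum_congr rfl hper]
  rw [Finset.sum_add_distrib, Finset.sum_add_distrib, Finset.sum_add_distrib,
    Finset.sum_add_distrib, Finset.sum_add_distrib]
  rw [tele (fun k => x k ⬝ᵥ P.mulVec (x k)) T]
  rw [← Finset.mul_sum, ← Finset.mul_sum, Finset.sum_sub_distrib]
  ring
end
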